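/- arXiv:math/0011060 — 5 statements merged into one kernel-verified Lean document; each statement's English description precedes it below -/
import Mathlib

section
/- The collection of bases of an oriented even Δ-matroid is a Δ-matroid: if p : 2^I → {−1,0,1} satisfies the oriented even Δ-matroid axioms, then B = {A ⊆ I : p(A) ≠ 0} satisfies the symmetric exchange axiom. -/
/-- An **oriented even Δ-matroid** on `I = {1,…,n}`: a map
`p : 2^I → {+1, −1, 0}` such that (1) `p` is not identically zero; (2) any two sets
with nonzero value have cardinalities of equal parity; (3) whenever
`A Δ B = {i₁ < … < i_l}` and, for some `w ∈ {+1, −1}`, all the quantities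
`κ_j = w (−1)^j p(A Δ {i_j}) p(B Δ {i_j})` are nonnegative, they are all zero. -/
def IsOrientedEvenDeltaMatroid {n : ℕ} (p : Finset (Fin n) → SignType) : Prop :=
  (∃ S, p S ≠ 0) ∧
  (∀ A B : Finset (Fin n), p A ≠ 0 → p B ≠ 0 → A.card % 2 = B.card % 2) ∧
  (∀ A B : Finset (Fin n), ∀ w : SignType, (w = 1 ∨ w = -1) →
    (∀ j : Fin (symmDiff A B).card,
      0 ≤ w * (-1 : SignType) ^ ((j : ℕ) + 1) *
        p (symmDiff A {((symmDiff A B).orderIsoOfFin rfl j : Fin n)}) *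
        p (symmDiff B {((symmDiff A B).orderIsoOfFin rfl j : Fin n)})) →
    (∀ j : Fin (symmDiff A B).card,
      w * (-1 : SignType) ^ ((j : ℕ) + 1) *
        p (symmDiff A {((symmDiff A B).orderIsoOfFin rfl j : Fin n)}) *
        p (symmDiff B {((symmDiff A B).orderIsoOfFin rfl j : Fin n)}) = 0))

/-!
Suppose `p E ≠ 0`, `p F ≠ 0` and `e ∈ E Δ F`. Apply the orientation axiom to
`A = E Δ {e}` and `B = F Δ {e}`: then `A Δ B = E Δ F`, and at `i = e` the product
`p (A Δ {e}) p (B Δ {e}) = p E p F` is nonzero. Choosing the sign `w` so that this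
term of the sequence `κ` equals `1`, the axiom forbids all other terms from vanishing,
so some `f ≠ e` in `E Δ F` has `p (E Δ {e, f}) = p (A Δ {f}) ≠ 0`.
-/

namespace SignType

lemma mul_self_of_ne_zero {a : SignType} (ha : a ≠ 0) : a * a = 1 := by
  revert a
  decide

lemma eq_one_or_eq_neg_one_of_ne_zero {a : SignType} (ha : a ≠ 0) : a = 1 ∨ a = -1 := by
  rcases a.trichotomy with h | h | h <;> simp_all

end SignType

lemma Finset.symmDiff_singleton_singleton {α : Type*} [DecidableEq α] {a b : α} (h : a ≠ b) :
    symmDiff ({a} : Finset α) {b} = {a, b} := by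
  rw [(Finset.disjoint_singleton.2 h).symmDiff_eq_sup, Finset.sup_eq_union,
    Finset.insert_eq]

namespace IsOrientedEvenDeltaMatroid

variable {n : ℕ} {p : Finset (Fin n) → SignType}

theorem exists_ne_of_mul_ne_zero (hp : IsOrientedEvenDeltaMatroid p) {A B : Finset (Fin n)}
    {x : Fin n} (hx : x ∈ symmDiff A B) (hxAB : p (symmDiff A {x}) * p (symmDiff B {x}) ≠ 0) :
    ∃ y ∈ symmDiff A B, y ≠ x ∧ p (symmDiff A {y}) * p (symmDiff B {y}) ≠ 0 := by
  by_contra! hzero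
  set i := (symmDiff A B).orderIsoOfFin rfl
  set j₀ := i.symm ⟨x, hx⟩
  have hj₀ : (i j₀ : Fin n) = x := by simp [j₀]
  set w := (-1 : SignType) ^ ((j₀ : ℕ) + 1) * (p (symmDiff A {x}) * p (symmDiff B {x}))
  have hw : w ≠ 0 := mul_ne_zero (pow_ne_zero _ (by decide)) hxAB
  -- `w` is the `j₀`-th product itself, so the `j₀`-th term of `κ` is `w * w = 1`.
  have hκ : ∀ j : Fin (symmDiff A B).card, w * (-1 : SignType) ^ ((j : ℕ) + 1) *
      p (symmDiff A {(i j : Fin n)}) * p (symmDiff B {(i j : Fin n)}) =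
        if j = j₀ then 1 else 0 := by
    intro j
    simp only [mul_assoc]
    split_ifs with hj
    · rw [hj, hj₀]
      exact SignType.mul_self_of_ne_zero hw
    · have hne : (i j : Fin n) ≠ x := fun h => hj (i.symm_apply_eq.2 (Subtype.ext h.symm)).symm
      rw [hzero _ (i j).2 hne, mul_zero, mul_zero]
  have hκ₀ := hp.2.2 A B w (SignType.eq_one_or_eq_neg_one_of_ne_zero hw)
    (fun j => by rw [hκ]; split_ifs <;> decide) j₀
  rw [hκ, if_pos rfl] at hκ₀
  exact one_ne_zero hκ₀

end IsOrientedEvenDeltaMatroid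

/-- The collection of bases of an oriented even Δ-matroid is a Δ-matroid: the
support `{A : p A ≠ 0}` satisfies the symmetric exchange axiom: for `E, F` in the
support and `e ∈ E Δ F` there exists `f ∈ E Δ F` with `E Δ {e, f}` in the support. -/
theorem orientedEvenDeltaMatroid_bases_deltaMatroid {n : ℕ}
    (p : Finset (Fin n) → SignType) (hp : IsOrientedEvenDeltaMatroid p) :
    ∀ E F : Finset (Fin n), p E ≠ 0 → p F ≠ 0 → ∀ e ∈ symmDiff E F,
      ∃ f ∈ symmDiff E F, p (symmDiff E {e, f}) ≠ 0 := by
  intro E F hE hF e he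
  have hAB : symmDiff (symmDiff E {e}) (symmDiff F {e}) = symmDiff E F := by
    rw [symmDiff_symmDiff_symmDiff_comm, symmDiff_self, symmDiff_bot]
  obtain ⟨f, hf, hfe, hf₀⟩ := hp.exists_ne_of_mul_ne_zero (hAB ▸ he)
    (by simpa only [symmDiff_symmDiff_cancel_right] using mul_ne_zero hE hF)
  refine ⟨f, hAB ▸ hf, ?_⟩
  rw [← Finset.symmDiff_singleton_singleton hfe.symm, ← symmDiff_assoc]
  exact left_ne_zero_of_mul hf₀
end

section
/- Let C be a real k×n matrix of rank k, and define χ : I^k → {−1,0,1} by χ(j₁,…,j_k) = sign det of the k×k matrix formed by columns j₁,…,j_k of C. Then χ is a chirotope: it is nonzero, alternating, and satisfies the chirotope exchange condition. -/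
open Matrix


/-- A **chirotope** of rank `k` on `I = {1,…,n}`: a map `χ : I^k → {−1, 0, 1}`
(encoded with integer values) such that (1) `χ` is not identically zero; (2) `χ` is
alternating; (3) `χ` satisfies the chirotope (Grassmann–Plücker) exchange condition. -/
def IsChirotope {n k : ℕ} (χ : (Fin k → Fin n) → ℤ) : Prop :=
  (∀ v, χ v = -1 ∨ χ v = 0 ∨ χ v = 1) ∧
  (∃ v, χ v ≠ 0) ∧
  (∀ (v : Fin k → Fin n) (σ : Equiv.Perm (Fin k)),
    χ (v ∘ σ) = (Equiv.Perm.sign σ : ℤ) * χ v) ∧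
  (∀ (hk : 0 < k) (x y : Fin k → Fin n),
    (∀ i : Fin k,
      0 ≤ χ (Function.update x ⟨0, hk⟩ (y i)) * χ (Function.update y i (x ⟨0, hk⟩))) →
    0 ≤ χ x * χ y)

lemma signtype_cast_nonneg (s : SignType) : (0 : ℤ) ≤ (s : ℤ) ↔ 0 ≤ s := by
  cases s <;> decide

/-- Multiplying on the left distributes over column update. -/
lemma mul_updateCol_aux {k : ℕ} (X M : Matrix (Fin k) (Fin k) ℝ) (c : Fin k)
    (b : Fin k → ℝ) :
    X * M.updateCol c b = (X * M).updateCol c (X *ᵥ b) := by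
  ext i l
  by_cases hl : l = c
  · subst hl
    simp [Matrix.mul_apply, Matrix.updateCol_apply, Matrix.mulVec, dotProduct]
  · simp [Matrix.mul_apply, Matrix.updateCol_apply, hl]

/-- The Grassmann–Plücker identity for determinants, assuming `X` invertible. -/
lemma gp_identity {k : ℕ} (c0 : Fin k) (X Y : Matrix (Fin k) (Fin k) ℝ)
    (hX : X.det ≠ 0) :
    X.det * Y.det =
      ∑ j : Fin k, (X.updateCol c0 (fun i => Y i j)).det *
        (Y.updateCol j (fun i => X i c0)).det := by
  have hXu : IsUnit X.det := isUnit_iff_ne_zero.mpr hX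
  set Z : Matrix (Fin k) (Fin k) ℝ := X⁻¹ * Y with hZ
  have hXZ : X * Z = Y := by
    rw [hZ, ← Matrix.mul_assoc, Matrix.mul_nonsing_inv X hXu, Matrix.one_mul]
  have hcol : ∀ j, (fun i => Y i j) = X *ᵥ (fun i => Z i j) := by
    intro j
    funext i
    rw [← hXZ]
    simp [Matrix.mul_apply, Matrix.mulVec, dotProduct]
  have hXcol : (fun i => X i c0) = X *ᵥ Pi.single c0 1 := by
    funext i
    simp [Matrix.mulVec_single]
  have h1 : ∀ j, (X.updateCol c0 (fun i => Y i j)).det = X.det * Z c0 j := by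
    intro j
    have : X.updateCol c0 (fun i => Y i j)
        = X * (1 : Matrix (Fin k) (Fin k) ℝ).updateCol c0 (fun i => Z i j) := by
      rw [mul_updateCol_aux, Matrix.mul_one, hcol]
    rw [this, Matrix.det_mul, ← Matrix.cramer_apply, Matrix.cramer_one]
    rfl
  have h2 : ∀ j, (Y.updateCol j (fun i => X i c0)).det
      = X.det * Matrix.cramer Z (Pi.single c0 1) j := by
    intro j
    have : Y.updateCol j (fun i => X i c0)
        = X * Z.updateCol j (Pi.single c0 1) := by
      rw [mul_updateCol_aux, hXZ, hXcol]
    rw [this, Matrix.det_mul, Matrix.cramer_apply]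
  have hsum : ∑ j : Fin k, Z c0 j * Matrix.cramer Z (Pi.single c0 1) j
      = Z.det := by
    have := congr_fun (Matrix.mulVec_cramer Z (Pi.single c0 1)) c0
    simpa [Matrix.mulVec, dotProduct] using this
  calc X.det * Y.det = X.det * (X.det * Z.det) := by rw [← hXZ, Matrix.det_mul]
    _ = X.det * (X.det * ∑ j : Fin k, Z c0 j * Matrix.cramer Z (Pi.single c0 1) j) := by
        rw [hsum]
    _ = ∑ j : Fin k, (X.det * Z c0 j) * (X.det * Matrix.cramer Z (Pi.single c0 1) j) := by
        rw [Finset.mul_sum, Finset.mul_sum]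
        congr 1; funext j; ring
    _ = _ := by
        refine Finset.sum_congr rfl fun j _ => ?_
        rw [h1 j, h2 j]

/-- Updating an index in the column selection corresponds to updating a column of the
selected submatrix. -/
lemma submatrix_update_aux {n k : ℕ} (C : Matrix (Fin k) (Fin n) ℝ)
    (v : Fin k → Fin n) (c : Fin k) (j : Fin n) :
    (Matrix.of fun i l : Fin k => C i (Function.update v c j l))
      = (Matrix.of fun i l : Fin k => C i (v l)).updateCol c (fun i => C i j) := by
  ext i l
  by_cases hl : l = c
  · subst hl; simp [Matrix.updateCol_apply]
  · simp [Matrix.updateCol_apply, hl, Function.update_apply]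

/-- Let `C` be a real `k × n` matrix of rank `k`, and define
`χ(j₁,…,j_k)` as the sign of the determinant of the `k × k` matrix formed by
columns `j₁,…,j_k` of `C`.  Then `χ` is a chirotope. -/
theorem matrix_chirotope {n k : ℕ} (C : Matrix (Fin k) (Fin n) ℝ)
    (hC : C.rank = k) :
    IsChirotope (fun v : Fin k → Fin n =>
      ((SignType.sign (Matrix.det (Matrix.of fun i j : Fin k => C i (v j)))) : ℤ)) := by
  refine ⟨?_, ?_, ?_, ?_⟩
  · intro v
    have h : ∀ s : SignType, (s : ℤ) = -1 ∨ (s : ℤ) = 0 ∨ (s : ℤ) = 1 := by decide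
    exact h _
  · -- existence of a nonzero value: rank k gives k linearly independent columns
    have hspan : Submodule.span ℝ (Set.range Cᵀ) = ⊤ := by
      apply Submodule.eq_top_of_finrank_eq
      rw [show Set.range Cᵀ = Set.range C.col from rfl, ← Matrix.range_mulVecLin]
      have : C.rank = Module.finrank ℝ (LinearMap.range C.mulVecLin) := rfl
      rw [← this, hC]
      simp [Module.finrank_fintype_fun_eq_card]
    obtain ⟨b, hbsub, hbspan, hbli⟩ := exists_linearIndependent ℝ (Set.range Cᵀ)
    rw [hspan] at hbspan
    have hfin : b.Finite := hbli.setFinite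
    have : Fintype b := hfin.fintype
    have hbasis : Module.Basis b ℝ (Fin k → ℝ) := Module.Basis.mk hbli (by rw [Subtype.range_coe]; rw [hbspan])
    have hcard : Fintype.card b = k := by
      have := Module.finrank_eq_card_basis hbasis
      simpa [Module.finrank_fintype_fun_eq_card] using this.symm
    obtain ⟨e⟩ : Nonempty (Fin k ≃ b) := ⟨(Fintype.equivFinOfCardEq hcard).symm⟩
    have hchoice : ∀ j : Fin k, ∃ m : Fin n, Cᵀ m = (e j : Fin k → ℝ) := by
      intro j
      exact hbsub (e j).2
    choose v hv using hchoice
    refine ⟨v, ?_⟩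
    beta_reduce
    have hli : LinearIndependent ℝ (fun j : Fin k =>
        ((Matrix.of fun i j' : Fin k => C i (v j'))ᵀ j : Fin k → ℝ)) := by
      have : (fun j : Fin k => ((Matrix.of fun i j' : Fin k => C i (v j'))ᵀ j : Fin k → ℝ))
          = fun j : Fin k => (e j : Fin k → ℝ) := by
        funext j
        have := hv j
        funext i
        simpa [Matrix.transpose_apply] using congr_fun this i
      rw [this]
      exact hbli.comp _ e.injective
    have hunit : IsUnit (Matrix.of fun i j' : Fin k => C i (v j')) :=
      Matrix.linearIndependent_cols_iff_isUnit.mp hli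
    have hdet : (Matrix.of fun i j' : Fin k => C i (v j')).det ≠ 0 := by
      intro h
      rw [Matrix.isUnit_iff_isUnit_det, h] at hunit
      exact (by simp : ¬ IsUnit (0 : ℝ)) hunit
    intro h
    apply hdet
    have h0 : ((SignType.sign ((Matrix.of fun i j' : Fin k => C i (v j')).det) : SignType) : ℤ)
        = ((0 : SignType) : ℤ) := by exact_mod_cast h
    have h1 : SignType.sign ((Matrix.of fun i j' : Fin k => C i (v j')).det) = 0 := by
      have : Function.Injective (fun s : SignType => (s : ℤ)) := by
        intro a b hab
        cases a <;> cases b <;> simp_all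
      exact this h0
    exact sign_eq_zero_iff.mp h1
  · -- alternating
    intro v σ
    beta_reduce
    have : (Matrix.of fun i j : Fin k => C i ((v ∘ σ) j))
        = (Matrix.of fun i j : Fin k => C i (v j)).submatrix id σ := by
      ext i j; rfl
    rw [this, Matrix.det_permute']
    set d := (Matrix.of fun i j : Fin k => C i (v j)).det
    rcases Int.units_eq_one_or (Equiv.Perm.sign σ) with hσ | hσ <;> rw [hσ]
    · simp
    · simp only [Units.val_neg, Units.val_one, Int.cast_neg, Int.cast_one, neg_one_mul,
        Left.sign_neg, SignType.coe_neg]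
  · -- exchange
    intro hk x y hxy
    beta_reduce
    beta_reduce at hxy
    set c0 : Fin k := ⟨0, hk⟩
    set X := Matrix.of fun i j : Fin k => C i (x j) with hXdef
    set Y := Matrix.of fun i j : Fin k => C i (y j) with hYdef
    by_cases hX : X.det = 0
    · simp [hX]
    by_cases hY : Y.det = 0
    · simp [hY]
    have hXY : 0 ≤ X.det * Y.det := by
      rw [gp_identity c0 X Y hX]
      apply Finset.sum_nonneg
      intro j _
      have hj := hxy j
      rw [submatrix_update_aux C x c0 (y j), submatrix_update_aux C y j (x c0)] at hj
      have hj' : (0 : ℤ) ≤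
          ((SignType.sign ((X.updateCol c0 fun i => C i (y j)).det) *
            SignType.sign ((Y.updateCol j fun i => C i (x c0)).det) : SignType) : ℤ) := by
        push_cast at hj ⊢
        convert hj using 2
      rw [← sign_mul] at hj'
      exact sign_nonneg_iff.mp ((signtype_cast_nonneg _).mp hj')
    have : (0 : SignType) ≤ SignType.sign (X.det * Y.det) := sign_nonneg_iff.mpr hXY
    rw [sign_mul] at this
    exact_mod_cast (signtype_cast_nonneg _).mpr this
end

section
/- Let C = (A, B) be a k×2n real matrix of rank k with columns indexed by J = {1,…,n,1*,…,n*}, such that A·Bᵗ is skew-symmetric (i.e. the row space of C is totally isotropic with respect to the standard symmetric hyperbolic form). Then the collection of admissible k-subsets of J indexing nonzero k×k minors of C is an orthogonal matroid: for every D_n-admissible ordering of J it contains a unique maximal member in the induced Gale order. -/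
/-- We model `J = {1,…,n, 1*,…,n*}` as `Fin n ⊕ Fin n`, with `Sum.inl i` the
unstarred element `i` and `Sum.inr i` the starred element `i*`.  The involution `*`
is `Sum.swap`.  A set `S ⊆ J` is **admissible** if `S ∩ S* = ∅`. -/
def JAdmissible {n : ℕ} (S : Finset (Fin n ⊕ Fin n)) : Prop :=
  ∀ x ∈ S, Sum.swap x ∉ S

/-- An admissible `n`-tuple `(a₁, …, a_n)` of elements of `J`: the `a_i` are
pairwise distinct and no `a_i` is the star of any `a_j` (so `{a₁,…,a_n}` is an
admissible transversal of `J`). -/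
def IsAdmissibleTuple {n : ℕ} (a : Fin n → Fin n ⊕ Fin n) : Prop :=
  Function.Injective a ∧ ∀ i j, a i ≠ Sum.swap (a j)

open Classical in
/-- The level of `x ∈ J` in the (partial or total) admissible ordering determined by
the admissible tuple `a`: the element `a_i` has level `i` (for `0 ≤ i < n`) and its
star `a_i*` has level `2n − 1 − i`. -/
noncomputable def lvl {n : ℕ} (a : Fin n → Fin n ⊕ Fin n) (x : Fin n ⊕ Fin n) : ℕ :=
  if h : ∃ i, a i = x then (h.choose : ℕ)
  else if h2 : ∃ i, a i = Sum.swap x then 2 * n - 1 - (h2.choose : ℕ)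
  else 0

/-- The `B_n`-admissible (total) ordering of `J` determined by the admissible tuple
`a`:  `a₁ ≺ ⋯ ≺ a_n ≺ a_n* ≺ ⋯ ≺ a₁*`. -/
def BnLe {n : ℕ} (a : Fin n → Fin n ⊕ Fin n) (x y : Fin n ⊕ Fin n) : Prop :=
  x = y ∨ lvl a x < lvl a y

/-- The `D_n`-admissible (partial) ordering of `J` determined by the admissible
tuple `a`:  `a₁ ≺ ⋯ ≺ a_{n-1} ≺ {a_n, a_n*} ≺ a_{n-1}* ≺ ⋯ ≺ a₁*`, where `a_n` and
`a_n*` (the elements of levels `n−1` and `n`) are incomparable. -/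
def DnLe {n : ℕ} (a : Fin n → Fin n ⊕ Fin n) (x y : Fin n ⊕ Fin n) : Prop :=
  x = y ∨ (lvl a x < lvl a y ∧ ¬(lvl a x = n - 1 ∧ lvl a y = n))

/-- The Gale order on equicardinal finite subsets of `J` induced by an ordering
`le` of `J`:  `A ≼ B` iff there is a bijection `φ` of `J` mapping `A` into `B` with
`x ≼ φ x` for all `x ∈ A` (for total orders this is the usual "sorted elements
dominate" Gale order). -/
def GaleLe {n : ℕ} (le : (Fin n ⊕ Fin n) → (Fin n ⊕ Fin n) → Prop)
    (A B : Finset (Fin n ⊕ Fin n)) : Prop :=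
  ∃ φ : Equiv.Perm (Fin n ⊕ Fin n), (∀ x ∈ A, φ x ∈ B) ∧ ∀ x ∈ A, le x (φ x)

/-- The property that the `k × k` minor of a `k × 2n` matrix `C` (columns indexed by
`J = Fin n ⊕ Fin n`) on the set `S` of column indices is nonzero (stated via an
arbitrary enumeration of `S`; the vanishing of the determinant does not depend on
the enumeration chosen). -/
def HasNonzeroMinor {k n : ℕ} (C : Matrix (Fin k) (Fin n ⊕ Fin n) ℝ)
    (S : Finset (Fin n ⊕ Fin n)) : Prop :=
  ∃ φ : Fin k → (Fin n ⊕ Fin n), Function.Injective φ ∧ Finset.univ.image φ = S ∧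
    Matrix.det (Matrix.of fun i j : Fin k => C i (φ j)) ≠ 0

namespace OrthoAux

open Finset Submodule Module

attribute [local instance] Classical.propDecidable

noncomputable section

variable {k n : ℕ}

def colv (C : Matrix (Fin k) (Fin n ⊕ Fin n) ℝ) (x : Fin n ⊕ Fin n) : Fin k → ℝ :=
  fun i => C i x

def Iso (C : Matrix (Fin k) (Fin n ⊕ Fin n) ℝ) : Prop :=
  ∀ a b : Fin k,
    (∑ i : Fin n, (C a (Sum.inl i) * C b (Sum.inr i) + C a (Sum.inr i) * C b (Sum.inl i))) = 0

structure GoodLvl (n : ℕ) (L : Fin n ⊕ Fin n → ℕ) : Prop where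
  lt : ∀ x, L x < 2 * n
  swap : ∀ x, L (Sum.swap x) = 2 * n - 1 - L x
  inj : Function.Injective L

lemma swap_ne (x : Fin n ⊕ Fin n) : Sum.swap x ≠ x := by
  cases x <;> simp

lemma iso_sum {C : Matrix (Fin k) (Fin n ⊕ Fin n) ℝ} (hC : Iso C)
    (f g : (Fin k → ℝ) →ₗ[ℝ] ℝ) :
    ∑ x : Fin n ⊕ Fin n, f (colv C x) * g (colv C (Sum.swap x)) = 0 := by
  classical
  set F : Fin k → ℝ := fun a => f fun j => if a = j then 1 else 0 with hF
  set G : Fin k → ℝ := fun b => g fun j => if b = j then 1 else 0 with hG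
  have hf : ∀ x, f (colv C x) = ∑ a, C a x * F a := fun x => by
    simpa [colv, smul_eq_mul] using LinearMap.pi_apply_eq_sum_univ f (colv C x)
  have hg : ∀ x, g (colv C x) = ∑ b, C b x * G b := fun x => by
    simpa [colv, smul_eq_mul] using LinearMap.pi_apply_eq_sum_univ g (colv C x)
  have key : ∀ x : Fin n ⊕ Fin n, f (colv C x) * g (colv C (Sum.swap x)) =
      ∑ a, ∑ b, F a * G b * (C a x * C b (Sum.swap x)) := by
    intro x
    rw [hf, hg, Finset.sum_mul_sum]
    exact Finset.sum_congr rfl fun a _ => Finset.sum_congr rfl fun b _ => by ring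
  calc ∑ x : Fin n ⊕ Fin n, f (colv C x) * g (colv C (Sum.swap x))
      = ∑ x : Fin n ⊕ Fin n, ∑ a, ∑ b, F a * G b * (C a x * C b (Sum.swap x)) :=
        Finset.sum_congr rfl fun x _ => key x
    _ = ∑ a, ∑ b, ∑ x : Fin n ⊕ Fin n, F a * G b * (C a x * C b (Sum.swap x)) := by
        rw [Finset.sum_comm]
        exact Finset.sum_congr rfl fun a _ => Finset.sum_comm
    _ = 0 := by
        apply Finset.sum_eq_zero; intro a _; apply Finset.sum_eq_zero; intro b _
        have h0 : (∑ x : Fin n ⊕ Fin n, C a x * C b (Sum.swap x)) = 0 := by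
          rw [Fintype.sum_sum_type]
          simp only [Sum.swap_inl, Sum.swap_inr]
          rw [← Finset.sum_add_distrib]
          exact hC a b
        rw [← Finset.mul_sum, h0, mul_zero]

lemma exists_sep {W : Submodule ℝ (Fin k → ℝ)} {v : Fin k → ℝ} (hv : v ∉ W) :
    ∃ f : (Fin k → ℝ) →ₗ[ℝ] ℝ, (∀ w ∈ W, f w = 0) ∧ f v ≠ 0 := by
  have h0 : W.mkQ v ≠ 0 := by
    simpa [Submodule.mkQ_apply, Submodule.Quotient.mk_eq_zero] using hv
  obtain ⟨φ, hφ⟩ : ∃ φ : Module.Dual ℝ ((Fin k → ℝ) ⧸ W), φ (W.mkQ v) ≠ 0 := by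
    by_contra hcon
    push_neg at hcon
    exact h0 ((Module.forall_dual_apply_eq_zero_iff ℝ _).1 hcon)
  refine ⟨φ.comp W.mkQ, fun w hw => ?_, hφ⟩
  have : W.mkQ w = 0 := by
    simpa [Submodule.mkQ_apply, Submodule.Quotient.mk_eq_zero] using hw
  simp [this]

lemma finrank_sup_singleton {W : Submodule ℝ (Fin k → ℝ)} {v : Fin k → ℝ} (hv : v ∉ W) :
    finrank ℝ ↥(span ℝ {v} ⊔ W) = finrank ℝ ↥W + 1 := by
  have hlt : W < span ℝ {v} ⊔ W := by
    refine lt_of_le_of_ne le_sup_right fun h => hv ?_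
    have hm : v ∈ span ℝ {v} ⊔ W := Submodule.mem_sup_left (subset_span (Set.mem_singleton v))
    rwa [← h] at hm
  have h1 : finrank ℝ ↥W < finrank ℝ ↥(span ℝ {v} ⊔ W) :=
    Submodule.finrank_lt_finrank_of_lt hlt
  have h2 : finrank ℝ ↥(span ℝ {v} ⊔ W) + finrank ℝ ↥(span ℝ {v} ⊓ W)
      = finrank ℝ ↥(span ℝ ({v} : Set (Fin k → ℝ))) + finrank ℝ ↥W :=
    Submodule.finrank_sup_add_finrank_inf_eq _ _
  have h3 : finrank ℝ ↥(span ℝ ({v} : Set (Fin k → ℝ))) ≤ 1 := by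
    by_cases hv0 : v = 0
    · rw [hv0, Submodule.span_zero_singleton]
      simp
    · rw [finrank_span_singleton hv0]
  omega


variable (C : Matrix (Fin k) (Fin n ⊕ Fin n) ℝ) (L : Fin n ⊕ Fin n → ℕ)

def Uspace (t : ℕ) : Submodule ℝ (Fin k → ℝ) :=
  span ℝ (colv C '' {x | t ≤ L x})

def Mset : Finset (Fin n ⊕ Fin n) :=
  Finset.univ.filter fun x => colv C x ∉ Uspace C L (L x + 1)

lemma mem_Mset {x : Fin n ⊕ Fin n} :
    x ∈ Mset C L ↔ colv C x ∉ Uspace C L (L x + 1) := by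
  simp [Mset]

lemma rank_count (hL : GoodLvl n L) (t : ℕ) :
    Uspace C L t = span ℝ (colv C '' {x | x ∈ Mset C L ∧ t ≤ L x}) ∧
    finrank ℝ ↥(Uspace C L t) = ((Mset C L).filter fun x => t ≤ L x).card := by
  suffices h : ∀ (d t : ℕ), 2 * n ≤ t + d →
      (Uspace C L t = span ℝ (colv C '' {x | x ∈ Mset C L ∧ t ≤ L x}) ∧
       finrank ℝ ↥(Uspace C L t) = ((Mset C L).filter fun x => t ≤ L x).card) by
    exact h (2 * n) t (by omega)
  intro d
  induction d with
  | zero =>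
    intro t ht
    have hempty : {x : Fin n ⊕ Fin n | t ≤ L x} = ∅ := by
      ext x
      simp only [Set.mem_setOf_eq, Set.mem_empty_iff_false, iff_false, not_le]
      have := hL.lt x; omega
    have hempty2 : {x : Fin n ⊕ Fin n | x ∈ Mset C L ∧ t ≤ L x} = ∅ := by
      ext x
      simp only [Set.mem_setOf_eq, Set.mem_empty_iff_false, iff_false, not_and, not_le]
      intro _; have := hL.lt x; omega
    have hfil : ((Mset C L).filter fun x => t ≤ L x) = ∅ := by
      apply Finset.filter_false_of_mem
      intro x _
      have := hL.lt x; omega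
    constructor
    · rw [Uspace, hempty, hempty2]
    · rw [Uspace, hempty, hfil]
      simp
  | succ d ih =>
    intro t ht
    by_cases hd : 2 * n ≤ t + d
    · exact ih t hd
    · have H1 := ih (t + 1) (by omega)
      by_cases hy : ∃ y, L y = t
      · obtain ⟨y, hyL⟩ := hy
        have hsets : {x : Fin n ⊕ Fin n | t ≤ L x} = insert y {x | t + 1 ≤ L x} := by
          ext x
          simp only [Set.mem_setOf_eq, Set.mem_insert_iff]
          constructor
          · intro hx
            rcases eq_or_lt_of_le hx with h | h
            · exact Or.inl (hL.inj (by omega))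
            · exact Or.inr h
          · rintro (rfl | hx) <;> omega
        by_cases hyM : y ∈ Mset C L
        · have hcy : colv C y ∉ Uspace C L (t + 1) := by
            rw [mem_Mset, hyL] at hyM; exact hyM
          have hU : Uspace C L t = span ℝ {colv C y} ⊔ Uspace C L (t + 1) := by
            rw [Uspace, hsets, Set.image_insert_eq, Submodule.span_insert]
            rfl
          have hsets2 : {x : Fin n ⊕ Fin n | x ∈ Mset C L ∧ t ≤ L x}
              = insert y {x | x ∈ Mset C L ∧ t + 1 ≤ L x} := by
            ext x
            simp only [Set.mem_setOf_eq, Set.mem_insert_iff]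
            constructor
            · rintro ⟨hxM, hx⟩
              rcases eq_or_lt_of_le hx with h | h
              · exact Or.inl (hL.inj (by omega))
              · exact Or.inr ⟨hxM, h⟩
            · rintro (rfl | ⟨hxM, hx⟩)
              · exact ⟨hyM, by omega⟩
              · exact ⟨hxM, by omega⟩
          have hfil : ((Mset C L).filter fun x => t ≤ L x)
              = insert y ((Mset C L).filter fun x => t + 1 ≤ L x) := by
            ext x
            simp only [Finset.mem_filter, Finset.mem_insert]
            constructor
            · rintro ⟨hxM, hx⟩
              rcases eq_or_lt_of_le hx with h | h
              · exact Or.inl (hL.inj (by omega))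
              · exact Or.inr ⟨hxM, h⟩
            · rintro (rfl | ⟨hxM, hx⟩)
              · exact ⟨hyM, by omega⟩
              · exact ⟨hxM, by omega⟩
          constructor
          · rw [hU, H1.1, hsets2, Set.image_insert_eq, Submodule.span_insert]
          · rw [hfil, Finset.card_insert_of_notMem (by simp [hyL]), hU]
            rw [finrank_sup_singleton hcy, H1.2]
        · have hcy : colv C y ∈ Uspace C L (t + 1) := by
            rw [mem_Mset, hyL] at hyM
            exact not_not.mp hyM
          have hU : Uspace C L t = Uspace C L (t + 1) := by
            rw [Uspace, hsets, Set.image_insert_eq, Submodule.span_insert_eq_span hcy]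
            rfl
          have hsets2 : {x : Fin n ⊕ Fin n | x ∈ Mset C L ∧ t ≤ L x}
              = {x | x ∈ Mset C L ∧ t + 1 ≤ L x} := by
            ext x
            simp only [Set.mem_setOf_eq]
            constructor
            · rintro ⟨hxM, hx⟩
              rcases eq_or_lt_of_le hx with h | h
              · have hxy : x = y := hL.inj (by omega)
                exact absurd (hxy ▸ hxM) hyM
              · exact ⟨hxM, h⟩
            · rintro ⟨hxM, hx⟩
              exact ⟨hxM, by omega⟩
          have hfil : ((Mset C L).filter fun x => t ≤ L x)
              = ((Mset C L).filter fun x => t + 1 ≤ L x) := by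
            ext x
            simp only [Finset.mem_filter]
            constructor
            · rintro ⟨hxM, hx⟩
              rcases eq_or_lt_of_le hx with h | h
              · have hxy : x = y := hL.inj (by omega)
                exact absurd (hxy ▸ hxM) hyM
              · exact ⟨hxM, h⟩
            · rintro ⟨hxM, hx⟩
              exact ⟨hxM, by omega⟩
          exact ⟨by rw [hU, H1.1, hsets2], by rw [hU, H1.2, hfil]⟩
      · push_neg at hy
        have hsets : {x : Fin n ⊕ Fin n | t ≤ L x} = {x | t + 1 ≤ L x} := by
          ext x
          simp only [Set.mem_setOf_eq]
          have := hy x; omega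
        have hsets2 : {x : Fin n ⊕ Fin n | x ∈ Mset C L ∧ t ≤ L x}
            = {x | x ∈ Mset C L ∧ t + 1 ≤ L x} := by
          ext x
          simp only [Set.mem_setOf_eq]
          have := hy x
          constructor
          · rintro ⟨h1, h2⟩; exact ⟨h1, by omega⟩
          · rintro ⟨h1, h2⟩; exact ⟨h1, by omega⟩
        have hfil : ((Mset C L).filter fun x => t ≤ L x)
            = ((Mset C L).filter fun x => t + 1 ≤ L x) := by
          apply Finset.filter_congr
          intro x _
          have := hy x
          constructor <;> intro h <;> simp_all <;> omega
        have hU : Uspace C L t = Uspace C L (t + 1) := by rw [Uspace, hsets]; rfl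
        exact ⟨by rw [hU, H1.1, hsets2], by rw [hU, H1.2, hfil]⟩

lemma card_le_finrank {S T : Finset (Fin n ⊕ Fin n)}
    (hS : LinearIndependent ℝ fun x : ↥S => colv C x.1) (hTS : T ⊆ S)
    {W : Submodule ℝ (Fin k → ℝ)} (hW : ∀ x ∈ T, colv C x ∈ W) :
    T.card ≤ finrank ℝ ↥W := by
  have hι : Function.Injective (fun x : ↥T => (⟨x.1, hTS x.2⟩ : ↥S)) := by
    intro x y hxy
    apply Subtype.ext
    simpa using congrArg Subtype.val hxy
  have hind : LinearIndependent ℝ fun x : ↥T => colv C x.1 := hS.comp _ hι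
  have hcard := linearIndependent_iff_card_eq_finrank_span.mp hind
  rw [Fintype.card_coe] at hcard
  rw [hcard]
  have hrange : Set.range (fun x : ↥T => colv C x.1) ⊆ ↑W := by
    rintro _ ⟨x, rfl⟩
    exact hW x.1 x.2
  exact Submodule.finrank_mono (span_le.mpr hrange)

lemma mset_indep (hL : GoodLvl n L) :
    LinearIndependent ℝ fun x : ↥(Mset C L) => colv C x.1 := by
  rw [linearIndependent_iff_card_eq_finrank_span]
  have h1 := (rank_count C L hL 0).1
  have h2 := (rank_count C L hL 0).2
  have hr : Set.range (fun x : ↥(Mset C L) => colv C x.1)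
      = colv C '' {x | x ∈ Mset C L ∧ 0 ≤ L x} := by
    ext v
    simp only [Set.mem_range, Set.mem_image, Set.mem_setOf_eq]
    constructor
    · rintro ⟨⟨x, hx⟩, rfl⟩
      exact ⟨x, ⟨hx, Nat.zero_le _⟩, rfl⟩
    · rintro ⟨x, ⟨hx, _⟩, rfl⟩
      exact ⟨⟨x, hx⟩, rfl⟩
  have hfil : ((Mset C L).filter fun x => 0 ≤ L x) = Mset C L := by
    apply Finset.filter_true_of_mem
    intro x _
    exact Nat.zero_le _
  rw [Fintype.card_coe, Set.finrank, hr, ← h1, h2, hfil]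

lemma mset_card (hL : GoodLvl n L) (hrk : finrank ℝ ↥(Uspace C L 0) = k) :
    (Mset C L).card = k := by
  have h2 := (rank_count C L hL 0).2
  have hfil : ((Mset C L).filter fun x => 0 ≤ L x) = Mset C L := by
    apply Finset.filter_true_of_mem
    intro x _
    exact Nat.zero_le _
  rw [hfil] at h2
  omega

lemma dep_sum {C : Matrix (Fin k) (Fin n ⊕ Fin n) ℝ} (hC : Iso C)
    (f : (Fin k → ℝ) →ₗ[ℝ] ℝ) :
    ∑ y : Fin n ⊕ Fin n, f (colv C (Sum.swap y)) • colv C y = 0 := by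
  funext a
  rw [Finset.sum_apply]
  simp only [Pi.smul_apply, smul_eq_mul]
  have h2 : ∑ y : Fin n ⊕ Fin n, f (colv C (Sum.swap y)) * colv C y a
      = ∑ y : Fin n ⊕ Fin n, f (colv C y) * colv C (Sum.swap y) a := by
    apply Fintype.sum_equiv (Equiv.sumComm (Fin n) (Fin n))
    intro y
    simp only [Equiv.sumComm_apply, Sum.swap_swap]
  rw [h2]
  have := iso_sum hC f (LinearMap.proj a)
  simpa [LinearMap.proj_apply, colv] using this

lemma mset_admissible (hC : Iso C) (hL : GoodLvl n L) : JAdmissible (Mset C L) := by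
  have main : ∀ x : Fin n ⊕ Fin n, L x < L (Sum.swap x) →
      x ∈ Mset C L → Sum.swap x ∈ Mset C L → False := by
    intro x hlt hx hsx
    rw [mem_Mset] at hx hsx
    obtain ⟨f, hf0, hfx⟩ := exists_sep hx
    have hvan : ∀ y : Fin n ⊕ Fin n, L x + 1 ≤ L y → f (colv C y) = 0 := fun y hy =>
      hf0 _ (subset_span ⟨y, hy, rfl⟩)
    have hdep := dep_sum hC f
    rw [← Finset.sum_erase_add _ _ (Finset.mem_univ (Sum.swap x))] at hdep
    have hmem : ∑ y ∈ Finset.univ.erase (Sum.swap x), f (colv C (Sum.swap y)) • colv C y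
        ∈ Uspace C L (L (Sum.swap x) + 1) := by
      apply Submodule.sum_mem
      intro y hy
      by_cases h0 : f (colv C (Sum.swap y)) = 0
      · rw [h0, zero_smul]
        exact Submodule.zero_mem _
      · apply Submodule.smul_mem
        apply subset_span
        refine ⟨y, ?_, rfl⟩
        have h1 : L (Sum.swap y) ≤ L x := by
          by_contra hc
          exact h0 (hvan _ (by omega))
        have h2 := hL.swap y
        have h3 := hL.swap x
        have h4 := hL.lt y
        have h5 := hL.lt x
        have hyne : y ≠ Sum.swap x := (Finset.mem_erase.1 hy).1
        have hLne : L y ≠ L (Sum.swap x) := fun hc => hyne (hL.inj hc)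
        simp only [Set.mem_setOf_eq]
        omega
    have hc0 : f (colv C (Sum.swap (Sum.swap x))) = f (colv C x) := by rw [Sum.swap_swap]
    rw [hc0] at hdep
    have hdv : f (colv C x) • colv C (Sum.swap x)
        = -∑ y ∈ Finset.univ.erase (Sum.swap x), f (colv C (Sum.swap y)) • colv C y :=
      eq_neg_of_add_eq_zero_right hdep
    apply hsx
    have heq : colv C (Sum.swap x)
        = (f (colv C x))⁻¹ • (f (colv C x) • colv C (Sum.swap x)) := by
      rw [smul_smul, inv_mul_cancel₀ hfx, one_smul]
    rw [heq, hdv]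
    exact Submodule.smul_mem _ _ (Submodule.neg_mem _ hmem)
  intro x hx hsx
  have hne : L x ≠ L (Sum.swap x) := fun hc => swap_ne x (hL.inj hc.symm)
  rcases Nat.lt_or_ge (L x) (L (Sum.swap x)) with h | h
  · exact main x h hx hsx
  · refine main (Sum.swap x) ?_ hsx (by rwa [Sum.swap_swap])
    rw [Sum.swap_swap]
    omega

lemma key_mid (hC : Iso C) (hL : GoodLvl n L) {p : Fin n ⊕ Fin n}
    (hp : L p = n - 1) (hn : 1 ≤ n) :
    colv C p ∈ Uspace C L (n + 1) ∨ colv C (Sum.swap p) ∈ Uspace C L (n + 1) := by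
  by_contra hcon
  push_neg at hcon
  obtain ⟨hp1, hq1⟩ := hcon
  have hLq : L (Sum.swap p) = n := by
    have := hL.swap p
    have := hL.lt p
    omega
  obtain ⟨f, hf0, hfp⟩ := exists_sep hp1
  obtain ⟨g, hg0, hgq⟩ := exists_sep hq1
  have hvanf : ∀ y, n + 1 ≤ L y → f (colv C y) = 0 := fun y hy =>
    hf0 _ (subset_span ⟨y, hy, rfl⟩)
  have hvang : ∀ y, n + 1 ≤ L y → g (colv C y) = 0 := fun y hy =>
    hg0 _ (subset_span ⟨y, hy, rfl⟩)
  have hpq : p ≠ Sum.swap p := (swap_ne p).symm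
  have reduce : ∀ h1 h2 : (Fin k → ℝ) →ₗ[ℝ] ℝ,
      (∀ y, n + 1 ≤ L y → h1 (colv C y) = 0) →
      (∀ y, n + 1 ≤ L y → h2 (colv C y) = 0) →
      h1 (colv C p) * h2 (colv C (Sum.swap p))
        + h1 (colv C (Sum.swap p)) * h2 (colv C p) = 0 := by
    intro h1 h2 hv1 hv2
    have hsum := iso_sum hC h1 h2
    have hvanish : ∀ y ∈ (Finset.univ : Finset (Fin n ⊕ Fin n)),
        y ∉ ({p, Sum.swap p} : Finset (Fin n ⊕ Fin n)) →
        h1 (colv C y) * h2 (colv C (Sum.swap y)) = 0 := by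
      intro y _ hy
      simp only [Finset.mem_insert, Finset.mem_singleton] at hy
      push_neg at hy
      have h2' := hL.swap y
      have h4 := hL.lt y
      have hyp : L y ≠ n - 1 := fun hc => hy.1 (hL.inj (by rw [hc, hp]))
      have hyq : L y ≠ n := fun hc => hy.2 (hL.inj (by rw [hc, hLq]))
      by_cases hcase : n + 1 ≤ L y
      · rw [hv1 y hcase, zero_mul]
      · rw [hv2 _ (by omega : n + 1 ≤ L (Sum.swap y)), mul_zero]
    rw [← Finset.sum_subset (Finset.subset_univ _) hvanish] at hsum
    rw [Finset.sum_pair hpq] at hsum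
    simpa only [Sum.swap_swap] using hsum
  have e1 := reduce f f hvanf hvanf
  have e2 := reduce g g hvang hvang
  have e3 := reduce f g hvanf hvang
  have hfq : f (colv C (Sum.swap p)) = 0 := by
    have h0 : f (colv C p) * f (colv C (Sum.swap p)) = 0 := by linarith
    rcases mul_eq_zero.mp h0 with h | h
    · exact absurd h hfp
    · exact h
  have hgp : g (colv C p) = 0 := by
    have h0 : g (colv C p) * g (colv C (Sum.swap p)) = 0 := by linarith
    rcases mul_eq_zero.mp h0 with h | h
    · exact h
    · exact absurd h hgq
  rw [hfq, hgp, mul_zero, add_zero] at e3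
  rcases mul_eq_zero.mp e3 with h | h
  · exact hfp h
  · exact hgq h

lemma count_gt {k : ℕ} {SL : Finset ℕ} (hS : SL.card = k) (i : Fin k) :
    (SL.filter fun v => SL.orderEmbOfFin hS i < v).card = k - (i + 1) := by
  have hinj : Function.Injective (SL.orderEmbOfFin hS) := (SL.orderEmbOfFin hS).injective
  have himg : SL.filter (fun v => SL.orderEmbOfFin hS i < v)
      = (Finset.Ioi i).image (SL.orderEmbOfFin hS) := by
    ext v
    simp only [Finset.mem_filter, Finset.mem_image, Finset.mem_Ioi]
    constructor
    · rintro ⟨hv, hlt⟩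
      have hrange : v ∈ Set.range (SL.orderEmbOfFin hS) := by
        rw [Finset.range_orderEmbOfFin]
        exact hv
      obtain ⟨j, rfl⟩ := hrange
      exact ⟨j, (SL.orderEmbOfFin hS).strictMono.lt_iff_lt.mp hlt, rfl⟩
    · rintro ⟨j, hij, rfl⟩
      exact ⟨Finset.orderEmbOfFin_mem _ _ _, (SL.orderEmbOfFin hS).strictMono hij⟩
  rw [himg, Finset.card_image_of_injective _ hinj, Fin.card_Ioi]
  omega

lemma sorted_dom {k : ℕ} {SL ML : Finset ℕ} (hS : SL.card = k) (hM : ML.card = k)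
    (hcnt : ∀ t, (SL.filter fun v => t ≤ v).card ≤ (ML.filter fun v => t ≤ v).card)
    (i : Fin k) : SL.orderEmbOfFin hS i ≤ ML.orderEmbOfFin hM i := by
  by_contra hlt
  push_neg at hlt
  set s := SL.orderEmbOfFin hS i with hs
  have h1 : k - i ≤ (SL.filter fun v => s ≤ v).card := by
    have hsub : ((Finset.Ici i).image (SL.orderEmbOfFin hS)) ⊆ SL.filter fun v => s ≤ v := by
      intro v hv
      simp only [Finset.mem_image, Finset.mem_Ici] at hv
      obtain ⟨j, hij, rfl⟩ := hv
      exact Finset.mem_filter.2 ⟨Finset.orderEmbOfFin_mem _ _ _,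
        (SL.orderEmbOfFin hS).monotone hij⟩
    calc k - i = (Finset.Ici i).card := (Fin.card_Ici i).symm
      _ = ((Finset.Ici i).image (SL.orderEmbOfFin hS)).card :=
          (Finset.card_image_of_injective _ (SL.orderEmbOfFin hS).injective).symm
      _ ≤ _ := Finset.card_le_card hsub
  have h2 : k - i ≤ (ML.filter fun v => s ≤ v).card := le_trans h1 (hcnt s)
  have h4 : (i : ℕ) + 1 ≤ (ML.filter fun v => v < s).card := by
    have hsub : ((Finset.Iic i).image (ML.orderEmbOfFin hM)) ⊆ ML.filter fun v => v < s := by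
      intro v hv
      simp only [Finset.mem_image, Finset.mem_Iic] at hv
      obtain ⟨j, hji, rfl⟩ := hv
      exact Finset.mem_filter.2 ⟨Finset.orderEmbOfFin_mem _ _ _,
        lt_of_le_of_lt ((ML.orderEmbOfFin hM).monotone hji) hlt⟩
    calc (i : ℕ) + 1 = (Finset.Iic i).card := (Fin.card_Iic i).symm
      _ = ((Finset.Iic i).image (ML.orderEmbOfFin hM)).card :=
          (Finset.card_image_of_injective _ (ML.orderEmbOfFin hM).injective).symm
      _ ≤ _ := Finset.card_le_card hsub
  have h5 : (ML.filter fun v => v < s).card + (ML.filter fun v => s ≤ v).card = k := by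
    rw [← hM]
    have := Finset.card_filter_add_card_filter_not (s := ML) (p := fun v => v < s)
    simpa [not_lt] using this
  have := i.isLt
  omega

lemma filter_image_card {α : Type*} {S : Finset α} {L : α → ℕ} (hinj : Function.Injective L)
    (p : ℕ → Prop) :
    ((S.image L).filter fun v => p v).card = (S.filter fun x => p (L x)).card := by
  rw [Finset.filter_image]
  exact Finset.card_image_of_injective _ hinj

lemma minor_iff {C : Matrix (Fin k) (Fin n ⊕ Fin n) ℝ} {S : Finset (Fin n ⊕ Fin n)}
    (hcard : S.card = k) :
    HasNonzeroMinor C S ↔ LinearIndependent ℝ fun x : ↥S => colv C x.1 := by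
  constructor
  · rintro ⟨φ, hinj, himg, hdet⟩
    have hunit : IsUnit (Matrix.of fun i j : Fin k => C i (φ j)) :=
      (Matrix.isUnit_iff_isUnit_det _).2 (isUnit_iff_ne_zero.2 hdet)
    have hcols : LinearIndependent ℝ fun j : Fin k => colv C (φ j) := by
      have h := Matrix.linearIndependent_cols_iff_isUnit.2 hunit
      exact h
    have hmem : ∀ j : Fin k, φ j ∈ S := fun j => by
      rw [← himg]; exact Finset.mem_image_of_mem _ (Finset.mem_univ j)
    have hbij : Function.Bijective (fun j : Fin k => (⟨φ j, hmem j⟩ : ↥S)) := by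
      rw [Fintype.bijective_iff_injective_and_card]
      constructor
      · intro a b hab
        exact hinj (congrArg Subtype.val hab)
      · rw [Fintype.card_coe, hcard, Fintype.card_fin]
    set e := Equiv.ofBijective _ hbij with he
    have hfun : (fun x : ↥S => colv C x.1) = (fun j : Fin k => colv C (φ j)) ∘ e.symm := by
      funext x
      have : (e (e.symm x)).1 = x.1 := by rw [Equiv.apply_symm_apply]
      simp only [Function.comp_apply]
      rw [← this]
      rfl
    rw [hfun]
    exact hcols.comp _ e.symm.injective
  · intro hind
    have e : ↥S ≃ Fin k := (S.equivFin).trans (finCongr hcard)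
    refine ⟨fun j => (e.symm j).1, ?_, ?_, ?_⟩
    · intro a b hab
      exact e.symm.injective (Subtype.ext hab)
    · ext x
      simp only [Finset.mem_image, Finset.mem_univ, true_and]
      constructor
      · rintro ⟨j, rfl⟩
        exact (e.symm j).2
      · intro hx
        exact ⟨e ⟨x, hx⟩, by rw [Equiv.symm_apply_apply]⟩
    · have hcols : LinearIndependent ℝ fun j : Fin k => colv C (e.symm j).1 :=
        hind.comp _ e.symm.injective
      have hunit : IsUnit (Matrix.of fun i j : Fin k => C i ((e.symm j).1)) := by
        apply Matrix.linearIndependent_cols_iff_isUnit.1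
        exact hcols
      intro h0
      exact isUnit_iff_ne_zero.1 ((Matrix.isUnit_iff_isUnit_det _).1 hunit) h0

lemma gale_antisymm {L : Fin n ⊕ Fin n → ℕ} (hinj : Function.Injective L)
    {S M : Finset (Fin n ⊕ Fin n)} (hcard : S.card = M.card)
    (h1 : ∃ φ : Equiv.Perm (Fin n ⊕ Fin n), (∀ x ∈ S, φ x ∈ M) ∧
      ∀ x ∈ S, x = φ x ∨ L x < L (φ x))
    (h2 : ∃ ψ : Equiv.Perm (Fin n ⊕ Fin n), (∀ x ∈ M, ψ x ∈ S) ∧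
      ∀ x ∈ M, x = ψ x ∨ L x < L (ψ x)) : S = M := by
  obtain ⟨φ, hφ1, hφ2⟩ := h1
  obtain ⟨ψ, hψ1, hψ2⟩ := h2
  have himg : S.image φ = M := by
    apply Finset.eq_of_subset_of_card_le
    · intro y hy
      obtain ⟨x, hx, rfl⟩ := Finset.mem_image.1 hy
      exact hφ1 x hx
    · rw [Finset.card_image_of_injective _ φ.injective, hcard]
  have himg2 : M.image ψ = S := by
    apply Finset.eq_of_subset_of_card_le
    · intro y hy
      obtain ⟨x, hx, rfl⟩ := Finset.mem_image.1 hy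
      exact hψ1 x hx
    · rw [Finset.card_image_of_injective _ ψ.injective, hcard]
  have hle1 : ∀ x ∈ S, L x ≤ L (φ x) := by
    intro x hx
    rcases hφ2 x hx with h | h
    · rw [← h]
    · omega
  have hle2 : ∀ x ∈ M, L x ≤ L (ψ x) := by
    intro x hx
    rcases hψ2 x hx with h | h
    · rw [← h]
    · omega
  have hsum1 : ∑ x ∈ S, L x ≤ ∑ x ∈ S, L (φ x) := Finset.sum_le_sum hle1
  have hsum2 : ∑ x ∈ M, L x ≤ ∑ x ∈ M, L (ψ x) := Finset.sum_le_sum hle2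
  have hSφ : ∑ x ∈ S, L (φ x) = ∑ y ∈ M, L y := by
    rw [← himg, Finset.sum_image (fun a _ b _ hab => φ.injective hab)]
  have hMψ : ∑ x ∈ M, L (ψ x) = ∑ y ∈ S, L y := by
    rw [← himg2, Finset.sum_image (fun a _ b _ hab => ψ.injective hab)]
  rw [hSφ] at hsum1
  rw [hMψ] at hsum2
  have heq : ∑ x ∈ S, L x = ∑ x ∈ S, L (φ x) := by
    rw [hSφ]; omega
  have hall := (Finset.sum_eq_sum_iff_of_le hle1).1 heq
  apply Finset.eq_of_subset_of_card_le
  · intro x hx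
    have := hall x hx
    have hxφ : x = φ x := hinj this
    rw [hxφ]
    exact hφ1 x hx
  · omega

lemma lvl_apply {a : Fin n → Fin n ⊕ Fin n} (ha : IsAdmissibleTuple a) (i : Fin n) :
    lvl a (a i) = i := by
  have hex : ∃ j, a j = a i := ⟨i, rfl⟩
  rw [lvl, dif_pos hex]
  exact congrArg Fin.val (ha.1 hex.choose_spec)

lemma lvl_swap_apply {a : Fin n → Fin n ⊕ Fin n} (ha : IsAdmissibleTuple a) (i : Fin n) :
    lvl a (Sum.swap (a i)) = 2 * n - 1 - i := by
  have h1 : ¬∃ j, a j = Sum.swap (a i) := by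
    rintro ⟨j, hj⟩; exact ha.2 j i hj
  have hex : ∃ j, a j = Sum.swap (Sum.swap (a i)) := ⟨i, by rw [Sum.swap_swap]⟩
  rw [lvl, dif_neg h1, dif_pos hex]
  have : a hex.choose = a i := by
    have h := hex.choose_spec
    simpa only [Sum.swap_swap] using h
  rw [ha.1 this]

lemma tuple_cover {a : Fin n → Fin n ⊕ Fin n} (ha : IsAdmissibleTuple a)
    (x : Fin n ⊕ Fin n) : (∃ i, a i = x) ∨ (∃ i, a i = Sum.swap x) := by
  classical
  set idx : Fin n ⊕ Fin n → Fin n := Sum.elim id id with hidx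
  have hinj : Function.Injective (idx ∘ a) := by
    intro i j hij
    rcases h1 : a i with u | u <;> rcases h2 : a j with v | v <;>
      simp only [Function.comp_apply, h1, h2, hidx, Sum.elim_inl, Sum.elim_inr, id] at hij
    · exact ha.1 (by rw [h1, h2, hij])
    · exact absurd (by rw [h1, h2, hij]; rfl : a i = Sum.swap (a j)) (ha.2 i j)
    · exact absurd (by rw [h1, h2, hij]; rfl : a i = Sum.swap (a j)) (ha.2 i j)
    · exact ha.1 (by rw [h1, h2, hij])
  have hsurj : Function.Surjective (idx ∘ a) := Finite.surjective_of_injective hinj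
  obtain ⟨i, hi⟩ := hsurj (idx x)
  rcases h1 : a i with u | u <;> rcases h2 : x with v | v <;>
    simp only [Function.comp_apply, h1, h2, hidx, Sum.elim_inl, Sum.elim_inr, id] at hi
  · exact Or.inl ⟨i, by rw [h1, hi]⟩
  · exact Or.inr ⟨i, by rw [h1, hi]; rfl⟩
  · exact Or.inr ⟨i, by rw [h1, hi]; rfl⟩
  · exact Or.inl ⟨i, by rw [h1, hi]⟩

lemma goodLvl_of_admissible {a : Fin n → Fin n ⊕ Fin n} (ha : IsAdmissibleTuple a) :
    GoodLvl n (lvl a) := by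
  have cover := tuple_cover ha
  have hlvl := lvl_apply ha
  have hlvls := lvl_swap_apply ha
  have key : ∀ x : Fin n ⊕ Fin n, ∃ i : Fin n,
      (x = a i ∧ lvl a x = i ∧ lvl a (Sum.swap x) = 2 * n - 1 - i) ∨
      (x = Sum.swap (a i) ∧ lvl a x = 2 * n - 1 - i ∧ lvl a (Sum.swap x) = i) := by
    intro x
    rcases cover x with ⟨i, hi⟩ | ⟨i, hi⟩
    · exact ⟨i, Or.inl ⟨hi.symm, by rw [← hi, hlvl], by rw [← hi, hlvls]⟩⟩
    · have hx : x = Sum.swap (a i) := by rw [hi, Sum.swap_swap]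
      refine ⟨i, Or.inr ⟨hx, ?_, ?_⟩⟩
      · rw [hx, hlvls]
      · rw [hx, Sum.swap_swap, hlvl]
  constructor
  · intro x
    obtain ⟨i, hi | hi⟩ := key x <;> have := i.isLt <;> omega
  · intro x
    obtain ⟨i, hi | hi⟩ := key x <;> have := i.isLt <;> omega
  · intro x y hxy
    obtain ⟨i, hi⟩ := key x
    obtain ⟨j, hj⟩ := key y
    have hin := i.isLt; have hjn := j.isLt
    rcases hi with ⟨hx, hx1, _⟩ | ⟨hx, hx1, _⟩ <;> rcases hj with ⟨hy, hy1, _⟩ | ⟨hy, hy1, _⟩ <;>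
      rw [hx, hy]
    · have : i = j := Fin.ext (by omega)
      rw [this]
    · omega
    · omega
    · have : i = j := Fin.ext (by omega)
      rw [this]


lemma subtypeCongr_left {α : Type*} {p q : α → Prop} [DecidablePred p] [DecidablePred q]
    (e : {x // p x} ≃ {x // q x}) (f : {x // ¬p x} ≃ {x // ¬q x}) {x : α} (hx : p x) :
    (Equiv.subtypeCongr e f) x = (e ⟨x, hx⟩ : {x // q x}).1 := by
  simp [Equiv.subtypeCongr, Equiv.sumCompl_symm_apply_of_pos hx]

lemma dominance (hC : Iso C) (hL : GoodLvl n L) {S : Finset (Fin n ⊕ Fin n)}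
    (hScard : S.card = k) (hSadm : JAdmissible S)
    (hSind : LinearIndependent ℝ fun x : ↥S => colv C x.1)
    (hMcard : (Mset C L).card = k) :
    ∃ φ : Equiv.Perm (Fin n ⊕ Fin n), (∀ x ∈ S, φ x ∈ Mset C L) ∧
      ∀ x ∈ S, x = φ x ∨ (L x < L (φ x) ∧ ¬(L x = n - 1 ∧ L (φ x) = n)) := by
  have hMadm : JAdmissible (Mset C L) := mset_admissible C L hC hL
  have hSLcard : (S.image L).card = k := by
    rw [Finset.card_image_of_injective _ hL.inj, hScard]
  have hMLcard : ((Mset C L).image L).card = k := by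
    rw [Finset.card_image_of_injective _ hL.inj, hMcard]
  have hcnt : ∀ t, ((S.image L).filter fun v => t ≤ v).card
      ≤ (((Mset C L).image L).filter fun v => t ≤ v).card := by
    intro t
    rw [Finset.filter_image, Finset.filter_image,
      Finset.card_image_of_injective _ hL.inj, Finset.card_image_of_injective _ hL.inj]
    have hle : (S.filter fun x => t ≤ L x).card ≤ finrank ℝ ↥(Uspace C L t) := by
      apply card_le_finrank C hSind (Finset.filter_subset _ _)
      intro x hx
      exact subset_span ⟨x, (Finset.mem_filter.1 hx).2, rfl⟩
    rw [(rank_count C L hL t).2] at hle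
    exact hle
  have hdom := sorted_dom hSLcard hMLcard hcnt
  have hpair : ∀ i : Fin k, ¬((S.image L).orderEmbOfFin hSLcard i = n - 1
      ∧ ((Mset C L).image L).orderEmbOfFin hMLcard i = n) := by
    rintro i ⟨hSi, hMi⟩
    have hpSL : (n - 1 : ℕ) ∈ S.image L := by
      have h := Finset.orderEmbOfFin_mem (S.image L) hSLcard i
      rwa [hSi] at h
    have hqML : (n : ℕ) ∈ (Mset C L).image L := by
      have h := Finset.orderEmbOfFin_mem ((Mset C L).image L) hMLcard i
      rwa [hMi] at h
    obtain ⟨p, hpS, hpL⟩ := Finset.mem_image.1 hpSL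
    obtain ⟨q, hqM, hqL⟩ := Finset.mem_image.1 hqML
    have hn : 1 ≤ n := by
      rcases p with j | j
      · exact j.pos
      · exact j.pos
    have hqp : q = Sum.swap p := by
      apply hL.inj
      rw [hqL, hL.swap p, hpL]
      have := hL.lt p
      omega
    have hqS : q ∉ S := by
      rw [hqp]; exact hSadm p hpS
    have hpM : p ∉ Mset C L := by
      have h := hMadm q hqM
      rwa [hqp, Sum.swap_swap] at h
    have hnSL : (n : ℕ) ∉ S.image L := by
      intro hmem
      obtain ⟨s', hsS, hsL⟩ := Finset.mem_image.1 hmem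
      have hsq : s' = q := hL.inj (by rw [hsL, hqL])
      exact hqS (hsq ▸ hsS)
    have cS : (S.filter fun x => n + 1 ≤ L x).card = k - (i + 1) := by
      have h1 := count_gt hSLcard i
      rw [hSi] at h1
      have h2 : (S.image L).filter (fun v => n - 1 < v)
          = (S.image L).filter (fun v => n + 1 ≤ v) := by
        apply Finset.filter_congr
        intro v hv
        have hvn : v ≠ n := fun hc => hnSL (hc ▸ hv)
        exact ⟨fun h => by omega, fun h => by omega⟩
      rw [h2, Finset.filter_image, Finset.card_image_of_injective _ hL.inj] at h1
      exact h1
    have cM : ((Mset C L).filter fun x => n + 1 ≤ L x).card = k - (i + 1) := by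
      have h1 := count_gt hMLcard i
      rw [hMi] at h1
      have h2 : ((Mset C L).image L).filter (fun v => n < v)
          = ((Mset C L).image L).filter (fun v => n + 1 ≤ v) := by
        apply Finset.filter_congr
        intro v hv
        exact ⟨fun h => by omega, fun h => by omega⟩
      rw [h2, Finset.filter_image, Finset.card_image_of_injective _ hL.inj] at h1
      exact h1
    have hfin : finrank ℝ ↥(Uspace C L (n + 1)) = k - (i + 1) := by
      rw [(rank_count C L hL (n + 1)).2]
      exact cM
    have hqU : colv C q ∉ Uspace C L (n + 1) := by
      have h := (mem_Mset C L).1 hqM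
      rwa [hqL] at h
    have hpU : colv C p ∈ Uspace C L (n + 1) := by
      rcases key_mid C L hC hL hpL hn with h | h
      · exact h
      · rw [← hqp] at h
        exact absurd h hqU
    have hpfil : p ∉ S.filter fun x => n + 1 ≤ L x := by
      simp only [Finset.mem_filter, hpL, not_and]
      intro _
      omega
    have hTsub : insert p (S.filter fun x => n + 1 ≤ L x) ⊆ S := by
      intro x hx
      rcases Finset.mem_insert.1 hx with rfl | hx
      · exact hpS
      · exact Finset.filter_subset _ _ hx
    have hTW : ∀ x ∈ insert p (S.filter fun x => n + 1 ≤ L x),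
        colv C x ∈ Uspace C L (n + 1) := by
      intro x hx
      rcases Finset.mem_insert.1 hx with rfl | hx
      · exact hpU
      · exact subset_span ⟨x, (Finset.mem_filter.1 hx).2, rfl⟩
    have hcard := card_le_finrank C hSind hTsub hTW
    rw [Finset.card_insert_of_notMem hpfil, cS, hfin] at hcard
    have := i.isLt
    omega
  -- construct the permutation
  have hmemS : ∀ x : ↥S, L x.1 ∈ S.image L := fun x => Finset.mem_image_of_mem L x.2
  have hmemM : ∀ x : ↥(Mset C L), L x.1 ∈ (Mset C L).image L :=
    fun x => Finset.mem_image_of_mem L x.2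
  set fS : ↥S → Fin k :=
    fun x => ((S.image L).orderIsoOfFin hSLcard).symm ⟨L x.1, hmemS x⟩ with hfS
  set fM : ↥(Mset C L) → Fin k :=
    fun x => (((Mset C L).image L).orderIsoOfFin hMLcard).symm ⟨L x.1, hmemM x⟩ with hfM
  have hfSinj : Function.Injective fS := by
    intro x y hxy
    simp only [hfS] at hxy
    have h := congrArg (fun i => (((S.image L).orderIsoOfFin hSLcard) i : ℕ)) hxy
    simp only [OrderIso.apply_symm_apply] at h
    exact Subtype.ext (hL.inj h)
  have hfMinj : Function.Injective fM := by
    intro x y hxy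
    simp only [hfM] at hxy
    have h := congrArg (fun i => ((((Mset C L).image L).orderIsoOfFin hMLcard) i : ℕ)) hxy
    simp only [OrderIso.apply_symm_apply] at h
    exact Subtype.ext (hL.inj h)
  have hfSbij : Function.Bijective fS := by
    rw [Fintype.bijective_iff_injective_and_card]
    exact ⟨hfSinj, by rw [Fintype.card_coe, hScard, Fintype.card_fin]⟩
  have hfMbij : Function.Bijective fM := by
    rw [Fintype.bijective_iff_injective_and_card]
    exact ⟨hfMinj, by rw [Fintype.card_coe, hMcard, Fintype.card_fin]⟩
  set eS := Equiv.ofBijective fS hfSbij with heS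
  set eM := Equiv.ofBijective fM hfMbij with heM
  set em : ↥S ≃ ↥(Mset C L) := eS.trans eM.symm with hem
  have hSval : ∀ x : ↥S, ((S.image L).orderEmbOfFin hSLcard) (eS x) = L x.1 := by
    intro x
    have h1 : ((S.image L).orderIsoOfFin hSLcard) (eS x) = ⟨L x.1, hmemS x⟩ := by
      show ((S.image L).orderIsoOfFin hSLcard) (fS x) = _
      rw [hfS]
      exact ((S.image L).orderIsoOfFin hSLcard).apply_symm_apply _
    rw [← Finset.coe_orderIsoOfFin_apply, h1]
  have hMval : ∀ x : ↥S,
      (((Mset C L).image L).orderEmbOfFin hMLcard) (eS x) = L (em x).1 := by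
    intro x
    have h0 : eM (em x) = eS x := by
      rw [hem]
      simp only [Equiv.trans_apply]
      exact eM.apply_symm_apply _
    have h1 : (((Mset C L).image L).orderIsoOfFin hMLcard) (eS x) = ⟨L (em x).1, hmemM _⟩ := by
      rw [← h0]
      show (((Mset C L).image L).orderIsoOfFin hMLcard) (fM (em x)) = _
      rw [hfM]
      exact (((Mset C L).image L).orderIsoOfFin hMLcard).apply_symm_apply _
    rw [← Finset.coe_orderIsoOfFin_apply, h1]
  have hcompl : Fintype.card {x : Fin n ⊕ Fin n // ¬x ∈ S}
      = Fintype.card {x : Fin n ⊕ Fin n // ¬x ∈ Mset C L} := by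
    rw [Fintype.card_subtype_compl, Fintype.card_subtype_compl]
    congr 1
    rw [show Fintype.card {x : Fin n ⊕ Fin n // x ∈ S} = S.card from Fintype.card_coe S,
      show Fintype.card {x : Fin n ⊕ Fin n // x ∈ Mset C L} = (Mset C L).card from
        Fintype.card_coe (Mset C L), hScard, hMcard]
  refine ⟨Equiv.subtypeCongr em (Fintype.equivOfCardEq hcompl), ?_, ?_⟩
  · intro x hx
    rw [subtypeCongr_left em _ hx]
    exact (em ⟨x, hx⟩).2
  · intro x hx
    rw [subtypeCongr_left em _ hx]
    have h1 : L x = ((S.image L).orderEmbOfFin hSLcard) (eS ⟨x, hx⟩) := (hSval ⟨x, hx⟩).symm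
    have h2 : L (em ⟨x, hx⟩).1
        = (((Mset C L).image L).orderEmbOfFin hMLcard) (eS ⟨x, hx⟩) := (hMval ⟨x, hx⟩).symm
    have hle := hdom (eS ⟨x, hx⟩)
    have hnp := hpair (eS ⟨x, hx⟩)
    by_cases heq : L x = L (em ⟨x, hx⟩).1
    · left
      exact hL.inj heq
    · right
      refine ⟨by omega, ?_⟩
      rintro ⟨ha, hb⟩
      exact hnp ⟨by rw [← h1, ha], by rw [← h2, hb]⟩

end
end OrthoAux

/-- Let `C = (A, B)` be a `k × 2n` real matrix of rank `k` with columns indexed by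
`J`, such that `A·Bᵗ` is skew-symmetric (i.e. the row space of `C` is totally
isotropic for the standard symmetric hyperbolic form).  Then the collection of
admissible `k`-subsets of `J` indexing nonzero `k × k` minors of `C` is an
orthogonal matroid: for every `D_n`-admissible ordering of `J` it contains a unique
member dominating all members in the induced Gale order. -/
theorem isotropic_rowSpace_orthogonal_matroid {k n : ℕ}
    (A B : Matrix (Fin k) (Fin n) ℝ)
    (hrank : (Matrix.of fun i : Fin k => Sum.elim (A i) (B i)).rank = k)
    (hiso : (A * B.transpose).transpose = -(A * B.transpose))
    (a : Fin n → Fin n ⊕ Fin n) (ha : IsAdmissibleTuple a) :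
    ∃! M : Finset (Fin n ⊕ Fin n),
      (M.card = k ∧ JAdmissible M ∧
        HasNonzeroMinor (Matrix.of fun i : Fin k => Sum.elim (A i) (B i)) M) ∧
      ∀ S : Finset (Fin n ⊕ Fin n),
        (S.card = k ∧ JAdmissible S ∧
          HasNonzeroMinor (Matrix.of fun i : Fin k => Sum.elim (A i) (B i)) S) →
        GaleLe (DnLe a) S M := by
  classical
  set C : Matrix (Fin k) (Fin n ⊕ Fin n) ℝ :=
    Matrix.of fun i : Fin k => Sum.elim (A i) (B i) with hCdef
  have hC : OrthoAux.Iso C := by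
    intro a' b'
    have h1 : (∑ i : Fin n, C a' (Sum.inl i) * C b' (Sum.inr i)) = (A * B.transpose) a' b' := by
      rw [Matrix.mul_apply]
      exact Finset.sum_congr rfl fun i _ => rfl
    have h2 : (∑ i : Fin n, C a' (Sum.inr i) * C b' (Sum.inl i)) = (A * B.transpose) b' a' := by
      rw [Matrix.mul_apply]
      exact Finset.sum_congr rfl fun i _ => mul_comm _ _
    have h3 : (A * B.transpose) b' a' = -((A * B.transpose) a' b') := by
      have h := congrFun (congrFun hiso a') b'
      simpa [Matrix.transpose_apply, Matrix.neg_apply] using h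
    rw [Finset.sum_add_distrib, h1, h2, h3]
    ring
  have hL : OrthoAux.GoodLvl n (lvl a) := OrthoAux.goodLvl_of_admissible ha
  have hrk : Module.finrank ℝ ↥(OrthoAux.Uspace C (lvl a) 0) = k := by
    have h0 : OrthoAux.Uspace C (lvl a) 0 = Submodule.span ℝ (Set.range C.transpose) := by
      rw [OrthoAux.Uspace]
      congr 1
      ext v
      constructor
      · rintro ⟨x, _, rfl⟩
        exact ⟨x, rfl⟩
      · rintro ⟨x, rfl⟩
        exact ⟨x, Nat.zero_le _, rfl⟩
    rw [h0]; rw [Matrix.rank_eq_finrank_span_cols] at hrank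
    exact hrank
  set M := OrthoAux.Mset C (lvl a) with hMdef
  have hMcard : M.card = k := OrthoAux.mset_card C (lvl a) hL hrk
  have hMadm : JAdmissible M := OrthoAux.mset_admissible C (lvl a) hC hL
  have hMind := OrthoAux.mset_indep C (lvl a) hL
  have hMminor : HasNonzeroMinor C M := (OrthoAux.minor_iff hMcard).2 hMind
  have hdom : ∀ S : Finset (Fin n ⊕ Fin n),
      (S.card = k ∧ JAdmissible S ∧ HasNonzeroMinor C S) → GaleLe (DnLe a) S M := by
    rintro S ⟨hS1, hS2, hS3⟩
    obtain ⟨φ, hφ1, hφ2⟩ := OrthoAux.dominance C (lvl a) hC hL hS1 hS2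
      ((OrthoAux.minor_iff hS1).1 hS3) hMcard
    exact ⟨φ, hφ1, fun x hx => hφ2 x hx⟩
  refine ⟨M, ⟨⟨hMcard, hMadm, hMminor⟩, hdom⟩, ?_⟩
  rintro N ⟨⟨hN1, hN2, hN3⟩, hNdom⟩
  apply OrthoAux.gale_antisymm hL.inj (by rw [hN1, hMcard])
  · obtain ⟨φ, h1, h2⟩ := hdom N ⟨hN1, hN2, hN3⟩
    exact ⟨φ, h1, fun x hx => (h2 x hx).imp id fun h => h.1⟩
  · obtain ⟨ψ, h1, h2⟩ := hNdom M ⟨hMcard, hMadm, hMminor⟩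
    exact ⟨ψ, h1, fun x hx => (h2 x hx).imp id fun h => h.1⟩
end

section
/- A Lagrangian symplectic matroid is an orthogonal matroid if and only if it is even, i.e. |B ∩ I| has the same parity for all bases B. -/
set_option linter.all false
set_option linter.unusedVariables false


open Finset

namespace LagAux

variable {n : ℕ}

def prj : (Fin n ⊕ Fin n) → Fin n := Sum.elim id id

@[simp] lemma prj_inl (q : Fin n) : prj (Sum.inl q) = q := rfl
@[simp] lemma prj_inr (q : Fin n) : prj (Sum.inr q) = q := rfl

lemma prj_swap (x : Fin n ⊕ Fin n) : prj (Sum.swap x) = prj x := by cases x <;> rfl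

lemma swap_ne (x : Fin n ⊕ Fin n) : Sum.swap x ≠ x := by cases x <;> simp [Sum.swap]

lemma eq_or_eq_swap_of_prj {x y : Fin n ⊕ Fin n} (h : prj x = prj y) :
    x = y ∨ x = Sum.swap y := by
  cases x <;> cases y <;> simp_all [prj, Sum.swap]

section Tuple

variable {a : Fin n → Fin n ⊕ Fin n} (ha : IsAdmissibleTuple a)
include ha

lemma prj_a_inj : Function.Injective (fun i => prj (a i)) := by
  intro i j hij
  rcases eq_or_eq_swap_of_prj hij with h | h
  · exact ha.1 h
  · exact absurd h (ha.2 i j)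

lemma cover (x : Fin n ⊕ Fin n) : (∃ i, a i = x) ∨ (∃ i, a i = Sum.swap x) := by
  obtain ⟨i, hi⟩ := (Finite.injective_iff_surjective.mp (prj_a_inj ha)) (prj x)
  rcases eq_or_eq_swap_of_prj (hi : prj (a i) = prj x) with h | h
  · exact Or.inl ⟨i, h⟩
  · exact Or.inr ⟨i, h⟩

lemma lvl_apply (i : Fin n) : lvl a (a i) = i := by
  have h : ∃ j, a j = a i := ⟨i, rfl⟩
  rw [lvl, dif_pos h]
  exact congrArg Fin.val (ha.1 h.choose_spec)

lemma lvl_swap_apply (i : Fin n) : lvl a (Sum.swap (a i)) = 2 * n - 1 - i := by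
  have h1 : ¬ ∃ j, a j = Sum.swap (a i) := by rintro ⟨j, hj⟩; exact ha.2 j i hj
  have h2 : ∃ j, a j = Sum.swap (Sum.swap (a i)) := ⟨i, by rw [Sum.swap_swap]⟩
  rw [lvl, dif_neg h1, dif_pos h2]
  congr 1
  exact congrArg Fin.val (ha.1 (h2.choose_spec.trans (Sum.swap_swap _)))

lemma exists_of_lt {x : Fin n ⊕ Fin n} (h : lvl a x < n) : ∃ i, a i = x ∧ (i : ℕ) = lvl a x := by
  rcases cover ha x with ⟨i, hi⟩ | ⟨i, hi⟩
  · exact ⟨i, hi, by rw [← hi, lvl_apply ha]⟩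
  · exfalso
    have hx : x = Sum.swap (a i) := by rw [hi, Sum.swap_swap]
    have := lvl_swap_apply ha i
    rw [← hx] at this
    have := i.isLt
    omega

lemma exists_of_ge {x : Fin n ⊕ Fin n} (h : n ≤ lvl a x) :
    ∃ i, x = Sum.swap (a i) ∧ lvl a x = 2 * n - 1 - (i : ℕ) := by
  rcases cover ha x with ⟨i, hi⟩ | ⟨i, hi⟩
  · exfalso
    rw [← hi, lvl_apply ha] at h
    have := i.isLt
    omega
  · have hx : x = Sum.swap (a i) := by rw [hi, Sum.swap_swap]
    exact ⟨i, hx, by rw [hx, lvl_swap_apply ha]⟩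

lemma lvl_lt_n (i : Fin n) : lvl a (a i) < n := by rw [lvl_apply ha]; exact i.isLt

lemma lvl_swap_ge (i : Fin n) : n ≤ lvl a (Sum.swap (a i)) := by
  rw [lvl_swap_apply ha]; have := i.isLt; omega

lemma lvl_inj {x y : Fin n ⊕ Fin n} (h : lvl a x = lvl a y) : x = y := by
  rcases lt_or_ge (lvl a x) n with hx | hx
  · obtain ⟨i, hi, hiv⟩ := exists_of_lt ha hx
    obtain ⟨j, hj, hjv⟩ := exists_of_lt ha (h ▸ hx)
    rw [← hi, ← hj]
    congr 1
    exact Fin.ext (by omega)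
  · obtain ⟨i, hi, hiv⟩ := exists_of_ge ha hx
    obtain ⟨j, hj, hjv⟩ := exists_of_ge ha (h ▸ hx)
    rw [hi, hj]
    have hin := i.isLt; have hjn := j.isLt
    have : (i : ℕ) = (j : ℕ) := by omega
    congr 2
    exact Fin.ext this

end Tuple


def choiceT (S : Finset (Fin n ⊕ Fin n)) (q : Fin n) : Fin n ⊕ Fin n :=
  if Sum.inl q ∈ S then Sum.inl q else Sum.inr q

@[simp] lemma prj_choice (S : Finset (Fin n ⊕ Fin n)) (q : Fin n) : prj (choiceT S q) = q := by
  unfold choiceT; split <;> simp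

lemma choice_cases (S : Finset (Fin n ⊕ Fin n)) (q : Fin n) :
    choiceT S q = Sum.inl q ∨ choiceT S q = Sum.inr q := by
  unfold choiceT; split <;> simp

section Transversal

variable {S : Finset (Fin n ⊕ Fin n)} (hc : S.card = n) (hA : JAdmissible S)

include hA in
lemma prj_injOn : Set.InjOn prj (S : Set (Fin n ⊕ Fin n)) := by
  intro x hx y hy hxy
  rcases eq_or_eq_swap_of_prj hxy with h | h
  · exact h
  · exact absurd (h ▸ hx) (hA y hy)

include hc hA in
lemma mem_or (q : Fin n) : Sum.inl q ∈ S ∨ Sum.inr q ∈ S := by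
  have himg : S.image prj = univ := by
    apply Finset.eq_univ_of_card
    rw [Finset.card_image_of_injOn (prj_injOn hA), hc, Fintype.card_fin]
  have : q ∈ S.image prj := by rw [himg]; exact mem_univ q
  obtain ⟨x, hx, hxq⟩ := Finset.mem_image.mp this
  cases x with
  | inl p => simp at hxq; subst hxq; exact Or.inl hx
  | inr p => simp at hxq; subst hxq; exact Or.inr hx

include hc hA in
lemma choice_mem (q : Fin n) : choiceT S q ∈ S := by
  unfold choiceT
  split
  · assumption
  · rcases mem_or hc hA q with h | h
    · contradiction
    · exact h

include hA in
lemma choice_eq_of_mem {x : Fin n ⊕ Fin n} (hx : x ∈ S) : choiceT S (prj x) = x := by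
  cases x with
  | inl q => simp only [prj_inl]; unfold choiceT; rw [if_pos hx]
  | inr q =>
    have : Sum.inl q ∉ S := fun h => hA _ h hx
    simp only [prj_inr]; unfold choiceT; rw [if_neg this]

end Transversal

lemma inl_mem_iff_choice {S : Finset (Fin n ⊕ Fin n)} (q : Fin n) :
    Sum.inl q ∈ S ↔ choiceT S q = Sum.inl q := by
  unfold choiceT
  constructor
  · intro h; rw [if_pos h]
  · intro h
    by_contra hn
    rw [if_neg hn] at h
    exact absurd h (by simp)

lemma agree_iff_choice {S T : Finset (Fin n ⊕ Fin n)} (q : Fin n) :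
    (Sum.inl q ∈ S ↔ Sum.inl q ∈ T) ↔ choiceT S q = choiceT T q := by
  unfold choiceT
  by_cases h1 : Sum.inl q ∈ S <;> by_cases h2 : Sum.inl q ∈ T <;>
    simp [h1, h2]

lemma swap_choice_of_ne {S T : Finset (Fin n ⊕ Fin n)} {q : Fin n}
    (h : ¬(Sum.inl q ∈ S ↔ Sum.inl q ∈ T)) : choiceT T q = Sum.swap (choiceT S q) := by
  unfold choiceT
  by_cases h1 : Sum.inl q ∈ S <;> by_cases h2 : Sum.inl q ∈ T <;>
    simp_all [Sum.swap]

-- parity infrastructure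

lemma pcard_eq {S : Finset (Fin n ⊕ Fin n)} :
    (S.filter (fun x => x.isLeft = true)).card = (univ.filter fun q => Sum.inl q ∈ S).card := by
  apply Finset.card_bij (fun x _ => prj x)
  · intro x hx
    simp only [mem_filter] at hx ⊢
    cases x with
    | inl q => exact ⟨mem_univ _, hx.1⟩
    | inr q => simp at hx
  · intro x hx y hy hxy
    simp only [mem_filter] at hx hy
    rcases eq_or_eq_swap_of_prj hxy with h | h
    · exact h
    · exfalso; cases x <;> cases y <;> simp_all [Sum.swap]
  · intro q hq
    simp only [mem_filter, mem_univ, true_and] at hq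
    exact ⟨Sum.inl q, by simp [hq]⟩

lemma inter_card_eq {S T : Finset (Fin n ⊕ Fin n)} (hAS : JAdmissible S) (hAT : JAdmissible T)
    (hcS : S.card = n) (hcT : T.card = n) :
    (S ∩ T).card = (univ.filter fun q => (Sum.inl q ∈ S ↔ Sum.inl q ∈ T)).card := by
  apply Finset.card_bij (fun x _ => prj x)
  · intro x hx
    rw [mem_inter] at hx
    simp only [mem_filter, mem_univ, true_and]
    cases x with
    | inl q => simp [hx.1, hx.2]
    | inr q =>
      have h1 : Sum.inl q ∉ S := fun h => hAS _ h hx.1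
      have h2 : Sum.inl q ∉ T := fun h => hAT _ h hx.2
      simp [h1, h2]
  · intro x hx y hy hxy
    rw [mem_inter] at hx hy
    rcases eq_or_eq_swap_of_prj hxy with h | h
    · exact h
    · exact absurd (h ▸ hx.1) (hAS y hy.1)
  · intro q hq
    simp only [mem_filter, mem_univ, true_and] at hq
    by_cases h : Sum.inl q ∈ S
    · exact ⟨Sum.inl q, mem_inter.mpr ⟨h, hq.mp h⟩, by simp⟩
    · have h2 : Sum.inl q ∉ T := fun ht => h (hq.mpr ht)
      rcases mem_or hcS hAS q with h' | h'
      · contradiction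
      rcases mem_or hcT hAT q with h'' | h''
      · contradiction
      exact ⟨Sum.inr q, mem_inter.mpr ⟨h', h''⟩, by simp⟩

lemma parity1 {S T : Finset (Fin n ⊕ Fin n)} (hAS : JAdmissible S) (hAT : JAdmissible T)
    (hcS : S.card = n) (hcT : T.card = n) :
    ((S.filter (fun x => x.isLeft = true)).card + (T.filter (fun x => x.isLeft = true)).card
      + (S ∩ T).card) % 2 = n % 2 := by
  rw [pcard_eq, pcard_eq, inter_card_eq hAS hAT hcS hcT]
  rw [Finset.card_filter, Finset.card_filter, Finset.card_filter]
  rw [← Finset.sum_add_distrib, ← Finset.sum_add_distrib, Finset.sum_nat_mod]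
  have h : ∀ q : Fin n, ((if Sum.inl q ∈ S then 1 else 0) + (if Sum.inl q ∈ T then 1 else 0)
      + (if (Sum.inl q ∈ S ↔ Sum.inl q ∈ T) then 1 else 0)) % 2 = 1 := by
    intro q
    by_cases h1 : Sum.inl q ∈ S <;> by_cases h2 : Sum.inl q ∈ T <;> simp [h1, h2]
  calc (∑ q : Fin n, ((if Sum.inl q ∈ S then 1 else 0) + (if Sum.inl q ∈ T then 1 else 0)
      + (if (Sum.inl q ∈ S ↔ Sum.inl q ∈ T) then 1 else 0)) % 2) % 2
      = (∑ _q : Fin n, 1) % 2 := by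
        congr 1
        exact Finset.sum_congr rfl (fun q _ => h q)
    _ = n % 2 := by simp


lemma gale_count {le : (Fin n ⊕ Fin n) → (Fin n ⊕ Fin n) → Prop}
    {S M U : Finset (Fin n ⊕ Fin n)} (h : GaleLe le S M)
    (hU : ∀ x ∈ U, ∀ y, le x y → y ∈ U) :
    (S ∩ U).card ≤ (M ∩ U).card := by
  obtain ⟨φ, hmem, hle⟩ := h
  apply Finset.card_le_card_of_injOn (fun x => φ x)
  · intro x hx
    rw [mem_coe, mem_inter] at hx
    rw [mem_coe, mem_inter]
    exact ⟨hmem x hx.1, hU x hx.2 _ (hle x hx.1)⟩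
  · exact fun x _ y _ hxy => φ.injective hxy

lemma gale_force {le : (Fin n ⊕ Fin n) → (Fin n ⊕ Fin n) → Prop}
    {S M U : Finset (Fin n ⊕ Fin n)} (h : GaleLe le S M)
    (hU : ∀ x ∈ U, ∀ y, le x y → y ∈ U) (hUS : U ⊆ S) : U ⊆ M := by
  have h1 : S ∩ U = U := Finset.inter_eq_right.mpr hUS
  have h2 := gale_count h hU
  rw [h1] at h2
  have h3 : M ∩ U = U :=
    Finset.eq_of_subset_of_card_le Finset.inter_subset_right h2
  intro x hx
  rw [← h3] at hx
  exact (Finset.mem_inter.mp hx).1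

lemma pair_mem {S : Finset (Fin n ⊕ Fin n)} (hc : S.card = n) (hA : JAdmissible S)
    (x : Fin n ⊕ Fin n) : x ∈ S ∨ Sum.swap x ∈ S := by
  cases x with
  | inl q => exact (mem_or hc hA q).imp id id
  | inr q => exact ((mem_or hc hA q).symm).imp id id

lemma dcard_eq {a : Fin n → Fin n ⊕ Fin n} (ha : IsAdmissibleTuple a)
    {S : Finset (Fin n ⊕ Fin n)} (hc : S.card = n) (hA : JAdmissible S) :
    (S.filter (fun x => n ≤ lvl a x)).card = (univ.filter fun pos => a pos ∉ S).card := by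
  symm
  apply Finset.card_bij (fun pos _ => Sum.swap (a pos))
  · intro pos hpos
    simp only [mem_filter, mem_univ, true_and] at hpos
    rw [mem_filter]
    rcases pair_mem hc hA (a pos) with h | h
    · contradiction
    · exact ⟨h, lvl_swap_ge ha pos⟩
  · intro i _ j _ hij
    have : a i = a j := by
      have := congrArg Sum.swap hij
      rwa [Sum.swap_swap, Sum.swap_swap] at this
    exact ha.1 this
  · intro x hx
    rw [mem_filter] at hx
    obtain ⟨i, hi, _⟩ := exists_of_ge ha hx.2
    refine ⟨i, ?_, hi.symm⟩
    simp only [mem_filter, mem_univ, true_and]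
    intro hmem
    have := hA x hx.1
    rw [hi, Sum.swap_swap] at this
    exact this hmem

lemma pcard_reindex {a : Fin n → Fin n ⊕ Fin n} (ha : IsAdmissibleTuple a)
    (S : Finset (Fin n ⊕ Fin n)) :
    (univ.filter fun q => Sum.inl q ∈ S).card
      = (univ.filter fun pos => Sum.inl (prj (a pos)) ∈ S).card := by
  symm
  apply Finset.card_bij (fun pos _ => prj (a pos))
  · intro pos hpos
    simp only [mem_filter, mem_univ, true_and] at hpos ⊢
    exact hpos
  · intro i _ j _ hij
    exact prj_a_inj ha hij
  · intro q hq
    simp only [mem_filter, mem_univ, true_and] at hq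
    obtain ⟨pos, hpos⟩ := (Finite.injective_iff_surjective.mp (prj_a_inj ha)) q
    simp only at hpos
    refine ⟨pos, ?_, hpos⟩
    simp only [mem_filter, mem_univ, true_and]
    rw [hpos]
    exact hq

lemma parity2 {a : Fin n → Fin n ⊕ Fin n} (ha : IsAdmissibleTuple a)
    {S : Finset (Fin n ⊕ Fin n)} (hc : S.card = n) (hA : JAdmissible S) :
    ((S.filter (fun x => x.isLeft = true)).card + (S.filter (fun x => n ≤ lvl a x)).card) % 2
      = (univ.filter fun pos => (a pos).isLeft = true).card % 2 := by
  rw [pcard_eq, pcard_reindex ha, dcard_eq ha hc hA]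
  rw [Finset.card_filter, Finset.card_filter, Finset.card_filter]
  rw [← Finset.sum_add_distrib, Finset.sum_nat_mod]
  conv_rhs => rw [Finset.sum_nat_mod]
  congr 1
  apply Finset.sum_congr rfl
  intro pos _
  cases h : a pos with
  | inl q =>
    simp only [h, prj_inl, Sum.isLeft_inl]
    by_cases hq : Sum.inl q ∈ S <;> simp [hq]
  | inr q =>
    simp only [h, prj_inr, Sum.isLeft_inr]
    by_cases hq : Sum.inl q ∈ S
    · have h2 : Sum.inr q ∉ S := by
        have := hA _ hq
        simpa [Sum.swap] using this
      simp [hq, h2]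
    · have h2 : Sum.inr q ∈ S := by
        rcases mem_or hc hA q with h' | h'
        · contradiction
        · exact h'
      simp [hq, h2]

lemma exists_sigma (Cs Ds : Finset (Fin n)) (hdisj : ∀ q, q ∈ Cs ↔ q ∉ Ds)
    (hsum : Cs.card + Ds.card = n) (p1 : Fin n) (hp1 : p1 ∈ Ds) :
    ∃ σ : Fin n → Fin n, Function.Injective σ ∧
      (∀ pos : Fin n, (pos : ℕ) < Cs.card → σ pos ∈ Cs) ∧
      (∀ pos : Fin n, (pos : ℕ) = Cs.card → σ pos = p1) ∧
      (∀ pos : Fin n, Cs.card < (pos : ℕ) → σ pos ∈ Ds.erase p1) := by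
  classical
  have hDpos : 1 ≤ Ds.card := Finset.card_pos.mpr ⟨p1, hp1⟩
  set l : List (Fin n) := Cs.sort (· ≤ ·) ++ p1 :: (Ds.erase p1).sort (· ≤ ·) with hl
  have hlenC : (Cs.sort (· ≤ ·)).length = Cs.card := Finset.length_sort _
  have hlenD : ((Ds.erase p1).sort (· ≤ ·)).length = Ds.card - 1 := by
    rw [Finset.length_sort, Finset.card_erase_of_mem hp1]
  have hlen : l.length = n := by
    rw [hl, List.length_append, List.length_cons, hlenC, hlenD]
    omega
  have hnd : l.Nodup := by
    apply List.Nodup.append (Finset.sort_nodup _ _)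
    · exact List.nodup_cons.mpr ⟨by simp [Finset.mem_sort], Finset.sort_nodup _ _⟩
    · intro x hx hx2
      have hxC : x ∈ Cs := (Finset.mem_sort _).mp hx
      rcases List.mem_cons.mp hx2 with rfl | hx3
      · exact ((hdisj x).mp hxC) hp1
      · exact (hdisj x).mp hxC (Finset.mem_of_mem_erase ((Finset.mem_sort _).mp hx3))
  have hbnd : ∀ pos : Fin n, (pos : ℕ) < l.length := fun pos => by rw [hlen]; exact pos.isLt
  refine ⟨fun pos => l[(pos : ℕ)]'(hbnd pos), ?_, ?_, ?_, ?_⟩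
  · intro i j hij
    simp only at hij
    have h2 := (List.Nodup.getElem_inj_iff hnd).mp hij
    exact Fin.ext h2
  · intro pos hpos
    show l[(pos : ℕ)]'(hbnd pos) ∈ Cs
    have h1 : (pos : ℕ) < (Cs.sort (· ≤ ·)).length := by omega
    have heq : l[(pos : ℕ)]'(hbnd pos) = (Cs.sort (· ≤ ·))[(pos : ℕ)]'h1 :=
      List.getElem_append_left h1
    rw [heq]
    exact (Finset.mem_sort _).mp (List.getElem_mem _)
  · intro pos hpos
    show l[(pos : ℕ)]'(hbnd pos) = p1
    have h1 : (Cs.sort (· ≤ ·)).length ≤ (pos : ℕ) := by omega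
    have h2 : (pos : ℕ) - (Cs.sort (· ≤ ·)).length
        < (p1 :: (Ds.erase p1).sort (· ≤ ·)).length := by
      rw [List.length_cons, hlenD]
      omega
    have heq : l[(pos : ℕ)]'(hbnd pos)
        = (p1 :: (Ds.erase p1).sort (· ≤ ·))[(pos : ℕ) - (Cs.sort (· ≤ ·)).length]'h2 :=
      List.getElem_append_right h1
    rw [heq]
    have h3 : (pos : ℕ) - (Cs.sort (· ≤ ·)).length = 0 := by omega
    simp only [h3, List.getElem_cons_zero]
  · intro pos hpos
    show l[(pos : ℕ)]'(hbnd pos) ∈ Ds.erase p1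
    have h1 : (Cs.sort (· ≤ ·)).length ≤ (pos : ℕ) := by omega
    have h2 : (pos : ℕ) - (Cs.sort (· ≤ ·)).length
        < (p1 :: (Ds.erase p1).sort (· ≤ ·)).length := by
      rw [List.length_cons, hlenD]
      omega
    have heq : l[(pos : ℕ)]'(hbnd pos)
        = (p1 :: (Ds.erase p1).sort (· ≤ ·))[(pos : ℕ) - (Cs.sort (· ≤ ·)).length]'h2 :=
      List.getElem_append_right h1
    rw [heq]
    rw [List.getElem_cons]
    split
    · omega
    · exact (Finset.mem_sort _).mp (List.getElem_mem _)

set_option linter.all false in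
set_option linter.unusedVariables false in
lemma even_of_orthogonal {n : ℕ} (ℬ : Set (Finset (Fin n ⊕ Fin n)))
    (hadm : ∀ S ∈ ℬ, S.card = n ∧ JAdmissible S)
    (hLag : ∀ a : Fin n → Fin n ⊕ Fin n, IsAdmissibleTuple a →
      ∃ M ∈ ℬ, ∀ S ∈ ℬ, GaleLe (BnLe a) S M)
    (hDn : ∀ a : Fin n → Fin n ⊕ Fin n, IsAdmissibleTuple a →
      ∃ M ∈ ℬ, ∀ S ∈ ℬ, GaleLe (DnLe a) S M) :
    ∀ k : ℕ, ∀ S₁ ∈ ℬ, ∀ S₂ ∈ ℬ, n - (S₁ ∩ S₂).card = k →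
      (S₁.filter (fun x => x.isLeft = true)).card % 2
        = (S₂.filter (fun x => x.isLeft = true)).card % 2 := by
  classical
  intro k
  induction k using Nat.strong_induction_on with
  | _ k IH =>
  intro S₁ hS₁ S₂ hS₂ hk
  by_contra hne
  obtain ⟨hc1, ha1⟩ := hadm S₁ hS₁
  obtain ⟨hc2, ha2⟩ := hadm S₂ hS₂
  have hinter_le : (S₁ ∩ S₂).card ≤ n := by
    calc (S₁ ∩ S₂).card ≤ S₁.card := Finset.card_le_card Finset.inter_subset_left
    _ = n := hc1
  have hpar := parity1 ha1 ha2 hc1 hc2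
  have hkodd : k % 2 = 1 := by omega
  have hk1 : 1 ≤ k := by omega
  have hkn : k ≤ n := by omega
  set Cs := univ.filter (fun q => (Sum.inl q ∈ S₁ ↔ Sum.inl q ∈ S₂)) with hCsd
  set Ds := univ.filter (fun q => ¬(Sum.inl q ∈ S₁ ↔ Sum.inl q ∈ S₂)) with hDsd
  have hCscard : Cs.card = (S₁ ∩ S₂).card := (inter_card_eq ha1 ha2 hc1 hc2).symm
  have hsum : Cs.card + Ds.card = n := by
    rw [hCsd, hDsd, Finset.card_filter_add_card_filter_not]
    simp
  set m := Cs.card with hmd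
  have hmval : m = n - k := by omega
  have hnm : m + k = n := by omega
  have hDscard : Ds.card = k := by omega
  have hDsne : Ds.Nonempty := Finset.card_pos.mp (by omega)
  obtain ⟨p1, hp1⟩ := hDsne
  have hdisjCD : ∀ q, q ∈ Cs ↔ q ∉ Ds := by
    intro q
    simp only [hCsd, hDsd, Finset.mem_filter, Finset.mem_univ, true_and]
    tauto
  have hCs_ne_p1 : p1 ∉ Cs := fun h => (hdisjCD p1).mp h hp1
  obtain ⟨σ, hσinj, hσC, hσp, hσD⟩ := exists_sigma Cs Ds hdisjCD hsum p1 hp1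
  have hσsurj : Function.Surjective σ := Finite.injective_iff_surjective.mp hσinj
  set g : Fin n → Fin n ⊕ Fin n := fun q =>
    if q ∈ Cs then Sum.swap (choiceT S₁ q) else if q = p1 then choiceT S₁ q else choiceT S₂ q
    with hgd
  set A : Fin n → Fin n ⊕ Fin n := fun pos => g (σ pos) with hAd
  have hprg : ∀ q, prj (g q) = q := by
    intro q
    simp only [hgd]
    split
    · rw [prj_swap, prj_choice]
    · split <;> rw [prj_choice]
  have hprA : ∀ pos, prj (A pos) = σ pos := fun pos => hprg (σ pos)
  have hAadm : IsAdmissibleTuple A := by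
    constructor
    · intro i j hij
      apply hσinj
      rw [← hprA i, ← hprA j, hij]
    · intro i j heq
      have h1 : σ i = σ j := by
        rw [← hprA i, ← hprA j, heq, prj_swap]
      have h2 : A i = A j := by simp only [hAd]; rw [h1]
      rw [h2] at heq
      exact swap_ne _ heq.symm
  have hq_mem : ∀ q : Fin n, q ∈ Cs ∨ q = p1 ∨ q ∈ Ds.erase p1 := by
    intro q
    by_cases h : q ∈ Cs
    · exact Or.inl h
    by_cases h2 : q = p1
    · exact Or.inr (Or.inl h2)
    · refine Or.inr (Or.inr (Finset.mem_erase.mpr ⟨h2, ?_⟩))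
      by_contra h3
      exact h ((hdisjCD q).mpr h3)
  have hch1 : ∀ q ∈ Cs, choiceT S₁ q = choiceT S₂ q := by
    intro q hq
    rw [← agree_iff_choice]
    simpa [hCsd] using hq
  have hch2 : ∀ q ∈ Ds, choiceT S₂ q = Sum.swap (choiceT S₁ q) := by
    intro q hq
    apply swap_choice_of_ne
    simpa [hDsd] using hq
  have hposC : ∀ pos : Fin n, (pos : ℕ) < m → A pos = Sum.swap (choiceT S₁ (σ pos)) := by
    intro pos h
    have hq := hσC pos h
    show g (σ pos) = _
    simp only [hgd]
    rw [if_pos hq]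
  have hposm : ∀ pos : Fin n, (pos : ℕ) = m → A pos = choiceT S₁ p1 := by
    intro pos h
    have hq := hσp pos h
    show g (σ pos) = _
    simp only [hgd]
    rw [hq, if_neg hCs_ne_p1, if_pos rfl]
  have hposD : ∀ pos : Fin n, m < (pos : ℕ) → A pos = choiceT S₂ (σ pos) := by
    intro pos h
    have hq := hσD pos h
    have hq1 : σ pos ∈ Ds := Finset.mem_of_mem_erase hq
    have hq2 : σ pos ≠ p1 := (Finset.mem_erase.mp hq).1
    have hq3 : σ pos ∉ Cs := fun hc => (hdisjCD _).mp hc hq1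
    show g (σ pos) = _
    simp only [hgd]
    rw [if_neg hq3, if_neg hq2]
  have hlvlC : ∀ q ∈ Cs, n + k ≤ lvl A (choiceT S₁ q) := by
    intro q hq
    obtain ⟨pos, hpos⟩ := hσsurj q
    have hplt : (pos : ℕ) < m := by
      rcases lt_trichotomy ((pos : ℕ)) m with h | h | h
      · exact h
      · exfalso
        have h2 := hσp pos h
        rw [hpos] at h2
        exact hCs_ne_p1 (h2 ▸ hq)
      · exfalso
        have h2 := hσD pos h
        rw [hpos] at h2
        exact (hdisjCD q).mp hq (Finset.mem_of_mem_erase h2)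
    have hval : choiceT S₁ q = Sum.swap (A pos) := by
      rw [hposC pos hplt, hpos, Sum.swap_swap]
    rw [hval, lvl_swap_apply hAadm]
    have := pos.isLt
    omega
  have hmlt : m < n := by omega
  have hAposm : A ⟨m, hmlt⟩ = choiceT S₁ p1 := hposm ⟨m, hmlt⟩ rfl
  have hlvlm : lvl A (choiceT S₁ p1) = m := by
    rw [← hAposm, lvl_apply hAadm]
  have hlvlm2 : lvl A (choiceT S₂ p1) = 2 * n - 1 - m := by
    rw [hch2 p1 hp1, ← hAposm, lvl_swap_apply hAadm]
  have hlvlD : ∀ q ∈ Ds.erase p1, ∃ pos : Fin n, σ pos = q ∧ m < (pos : ℕ) ∧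
      choiceT S₂ q = A pos ∧ choiceT S₁ q = Sum.swap (A pos) := by
    intro q hq
    obtain ⟨pos, hpos⟩ := hσsurj q
    have hqD : q ∈ Ds := Finset.mem_of_mem_erase hq
    have hqnp : q ≠ p1 := (Finset.mem_erase.mp hq).1
    have hpgt : m < (pos : ℕ) := by
      rcases lt_trichotomy ((pos : ℕ)) m with h | h | h
      · exfalso
        have h2 := hσC pos h
        rw [hpos] at h2
        exact (hdisjCD q).mp h2 hqD
      · exfalso
        have h2 := hσp pos h
        rw [hpos] at h2
        exact hqnp h2
      · exact h
    refine ⟨pos, hpos, hpgt, ?_, ?_⟩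
    · rw [hposD pos hpgt, hpos]
    · rw [hposD pos hpgt, hpos]
      have h3 := congrArg Sum.swap (hch2 q hqD)
      rw [Sum.swap_swap] at h3
      exact h3.symm
  have htopC : ∀ y, n + k ≤ lvl A y → y ∈ S₁ ∩ S₂ := by
    intro y hy
    obtain ⟨i, hi, hiv⟩ := exists_of_ge hAadm (le_trans (by omega) hy)
    have hilt : (i : ℕ) < m := by
      have := i.isLt
      omega
    have hC := hσC i hilt
    have hval : y = choiceT S₁ (σ i) := by
      rw [hi, hposC i hilt, Sum.swap_swap]
    rw [hval]
    refine Finset.mem_inter.mpr ⟨choice_mem hc1 ha1 _, ?_⟩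
    rw [hch1 _ hC]
    exact choice_mem hc2 ha2 _
  by_cases hke : k = 1
  · -- base case k = 1 : use the Dₙ hypothesis
    have hDs_only : ∀ q ∈ Ds, q = p1 := by
      intro q hq
      exact Finset.card_le_one.mp (le_of_eq (by rw [hDscard, hke])) q hq p1 hp1
    obtain ⟨M, hM, hDmax⟩ := hDn A hAadm
    obtain ⟨hMc, hMa⟩ := hadm M hM
    have hup1 : ∀ x ∈ S₁, ∀ y, DnLe A x y → y ∈ S₁ := by
      intro x hx y hxy
      rcases hxy with rfl | ⟨hlt, hcl⟩
      · exact hx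
      have hxval : x = choiceT S₁ (prj x) := (choice_eq_of_mem ha1 hx).symm
      rcases hq_mem (prj x) with hqC | hqp | hqD
      · have h1 := hlvlC _ hqC
        rw [← hxval] at h1
        exact (Finset.mem_inter.mp (htopC y (by omega))).1
      · have h1 : lvl A x = m := by rw [hxval, hqp]; exact hlvlm
        have h2 : lvl A y ≠ n := fun hyn => hcl ⟨by omega, hyn⟩
        exact (Finset.mem_inter.mp (htopC y (by omega))).1
      · exfalso
        exact (Finset.mem_erase.mp hqD).1 (hDs_only _ (Finset.mem_of_mem_erase hqD))
    have hup2 : ∀ x ∈ S₂, ∀ y, DnLe A x y → y ∈ S₂ := by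
      intro x hx y hxy
      rcases hxy with rfl | ⟨hlt, hcl⟩
      · exact hx
      have hxval : x = choiceT S₂ (prj x) := (choice_eq_of_mem ha2 hx).symm
      rcases hq_mem (prj x) with hqC | hqp | hqD
      · have h2 : x = choiceT S₁ (prj x) := by rw [hch1 _ hqC]; exact hxval
        have h1 := hlvlC _ hqC
        rw [← h2] at h1
        exact (Finset.mem_inter.mp (htopC y (by omega))).2
      · have h1 : lvl A x = 2 * n - 1 - m := by rw [hxval, hqp]; exact hlvlm2
        exact (Finset.mem_inter.mp (htopC y (by omega))).2
      · exfalso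
        exact (Finset.mem_erase.mp hqD).1 (hDs_only _ (Finset.mem_of_mem_erase hqD))
    have hS1M : S₁ = M :=
      Finset.eq_of_subset_of_card_le (gale_force (hDmax S₁ hS₁) hup1 (subset_refl S₁))
        (by rw [hMc, hc1])
    have hS2M : S₂ = M :=
      Finset.eq_of_subset_of_card_le (gale_force (hDmax S₂ hS₂) hup2 (subset_refl S₂))
        (by rw [hMc, hc2])
    exact hne (by rw [hS1M, ← hS2M])
  · -- inductive step, k ≥ 3
    have hk3 : 3 ≤ k := by omega
    obtain ⟨M, hM, hBmax⟩ := hLag A hAadm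
    obtain ⟨hMc, hMa⟩ := hadm M hM
    have hlvlCC : ∀ x ∈ S₁ ∩ S₂, n + k ≤ lvl A x := by
      intro x hx
      obtain ⟨hx1, hx2⟩ := Finset.mem_inter.mp hx
      have hxq : prj x ∈ Cs := by
        simp only [hCsd, Finset.mem_filter, Finset.mem_univ, true_and]
        rw [agree_iff_choice, choice_eq_of_mem ha1 hx1, choice_eq_of_mem ha2 hx2]
      have h1 := hlvlC _ hxq
      rwa [choice_eq_of_mem ha1 hx1] at h1
    have hCsub : S₁ ∩ S₂ ⊆ M := by
      apply gale_force (hBmax S₁ hS₁) ?_ Finset.inter_subset_left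
      intro x hx y hxy
      rcases hxy with rfl | hlt
      · exact hx
      · exact htopC y (by have := hlvlCC x hx; omega)
    have hz1M : choiceT S₂ p1 ∈ M := by
      have hsub : insert (choiceT S₂ p1) (S₁ ∩ S₂) ⊆ M := by
        apply gale_force (hBmax S₂ hS₂) ?_ ?_
        · intro x hx y hxy
          rcases hxy with rfl | hlt
          · exact hx
          rcases Finset.mem_insert.mp hx with rfl | hxC
          · rw [hlvlm2] at hlt
            exact Finset.mem_insert.mpr (Or.inr (htopC y (by omega)))
          · exact Finset.mem_insert.mpr (Or.inr (htopC y (by have := hlvlCC x hxC; omega)))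
        · intro x hx
          rcases Finset.mem_insert.mp hx with rfl | hxC
          · exact choice_mem hc2 ha2 p1
          · exact (Finset.mem_inter.mp hxC).2
      exact hsub (Finset.mem_insert_self _ _)
    have hS1top : S₁.filter (fun x => n ≤ lvl A x) = S₁.erase (choiceT S₁ p1) := by
      ext x
      simp only [Finset.mem_filter, Finset.mem_erase]
      constructor
      · rintro ⟨hxS, hge⟩
        refine ⟨?_, hxS⟩
        rintro rfl
        rw [hlvlm] at hge
        omega
      · rintro ⟨hne', hxS⟩
        refine ⟨hxS, ?_⟩
        have hxval : x = choiceT S₁ (prj x) := (choice_eq_of_mem ha1 hxS).symm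
        rcases hq_mem (prj x) with hqC | hqp | hqD
        · have h1 := hlvlC _ hqC
          rw [← hxval] at h1
          omega
        · exact absurd (by rw [hxval, hqp]) hne'
        · obtain ⟨pos, hpos, hpgt, hv2, hv1⟩ := hlvlD _ hqD
          rw [hxval, hv1, lvl_swap_apply hAadm]
          have := pos.isLt
          omega
    have hcount1 : (S₁.filter (fun x => n ≤ lvl A x)).card = n - 1 := by
      rw [hS1top, Finset.card_erase_of_mem (choice_mem hc1 ha1 p1), hc1]
    have hUfilter : ∀ T : Finset (Fin n ⊕ Fin n),
        T ∩ univ.filter (fun x => n ≤ lvl A x) = T.filter (fun x => n ≤ lvl A x) := by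
      intro T
      ext x
      simp [Finset.mem_inter, Finset.mem_filter]
    have hcount2 : n - 1 ≤ (M.filter (fun x => n ≤ lvl A x)).card := by
      have hU : ∀ x ∈ univ.filter (fun x => n ≤ lvl A x), ∀ y, BnLe A x y →
          y ∈ univ.filter (fun x => n ≤ lvl A x) := by
        intro x hx y hxy
        simp only [Finset.mem_filter, Finset.mem_univ, true_and] at hx ⊢
        rcases hxy with rfl | hlt
        · exact hx
        · omega
      have h := gale_count (hBmax S₁ hS₁) hU
      rw [hUfilter, hUfilter, hcount1] at h
      exact h
    have hMbot : (M.filter (fun x => ¬ n ≤ lvl A x)).card ≤ 1 := by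
      have h := Finset.card_filter_add_card_filter_not
        (s := M) (p := fun x => n ≤ lvl A x)
      omega
    set Aset := (Ds.erase p1).filter (fun q => choiceT S₂ q ∈ M) with hAsetd
    have hAsub : Aset ⊆ Ds.erase p1 := Finset.filter_subset _ _
    have hAcard : Aset.card ≤ 1 := by
      have hle : Aset.card ≤ (M.filter (fun x => ¬ n ≤ lvl A x)).card := by
        apply Finset.card_le_card_of_injOn (fun q => choiceT S₂ q)
        · intro q hq
          rw [Finset.mem_coe, Finset.mem_filter] at hq
          obtain ⟨pos, hpos, hpgt, hv2, hv1⟩ := hlvlD _ hq.1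
          rw [Finset.mem_coe, Finset.mem_filter]
          refine ⟨hq.2, ?_⟩
          beta_reduce
          rw [hv2, lvl_apply hAadm]
          have := pos.isLt
          omega
        · intro x _ y _ hxy
          have := congrArg prj hxy
          rwa [prj_choice, prj_choice] at this
      omega
    have hMCs : ∀ q ∈ Cs, choiceT M q = choiceT S₁ q := by
      intro q hq
      have h1 : choiceT S₁ q ∈ M := hCsub (Finset.mem_inter.mpr
        ⟨choice_mem hc1 ha1 q, by rw [hch1 q hq]; exact choice_mem hc2 ha2 q⟩)
      have h2 := choice_eq_of_mem hMa h1
      rwa [prj_choice] at h2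
    have hMp1 : choiceT M p1 = choiceT S₂ p1 := by
      have h2 := choice_eq_of_mem hMa hz1M
      rwa [prj_choice] at h2
    have hMA : ∀ q ∈ Aset, choiceT M q = choiceT S₂ q := by
      intro q hq
      rw [hAsetd, Finset.mem_filter] at hq
      have h2 := choice_eq_of_mem hMa hq.2
      rwa [prj_choice] at h2
    have hMD : ∀ q ∈ Ds.erase p1, q ∉ Aset → choiceT M q = choiceT S₁ q := by
      intro q hq hqA
      have h2 : choiceT S₂ q ∉ M := by
        intro h
        exact hqA (by rw [hAsetd, Finset.mem_filter]; exact ⟨hq, h⟩)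
      have h3 := hch2 q (Finset.mem_of_mem_erase hq)
      rcases choice_cases M q with h4 | h4 <;> rcases choice_cases S₁ q with h5 | h5
      · rw [h4, h5]
      · exfalso
        apply h2
        rw [h3, h5, Sum.swap_inr, ← h4]
        exact choice_mem hMc hMa q
      · exfalso
        apply h2
        rw [h3, h5, Sum.swap_inl, ← h4]
        exact choice_mem hMc hMa q
      · rw [h4, h5]
    have hagree1 : univ.filter (fun q => (Sum.inl q ∈ M ↔ Sum.inl q ∈ S₁))
        = Cs ∪ ((Ds.erase p1) \ Aset) := by
      ext q
      simp only [Finset.mem_filter, Finset.mem_univ, true_and, Finset.mem_union,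
        Finset.mem_sdiff]
      rw [agree_iff_choice]
      constructor
      · intro h
        rcases hq_mem q with hqC | rfl | hqD
        · exact Or.inl hqC
        · exfalso
          rw [hMp1, hch2 _ hp1] at h
          exact swap_ne _ h
        · refine Or.inr ⟨hqD, ?_⟩
          intro hqA
          rw [hMA q hqA, hch2 _ (Finset.mem_of_mem_erase hqD)] at h
          exact swap_ne _ h
      · rintro (hqC | ⟨hqD, hqA⟩)
        · rw [hMCs q hqC]
        · rw [hMD q hqD hqA]
    have hagree2 : univ.filter (fun q => (Sum.inl q ∈ M ↔ Sum.inl q ∈ S₂))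
        = insert p1 (Cs ∪ Aset) := by
      ext q
      simp only [Finset.mem_filter, Finset.mem_univ, true_and, Finset.mem_insert,
        Finset.mem_union]
      rw [agree_iff_choice]
      constructor
      · intro h
        rcases hq_mem q with hqC | rfl | hqD
        · exact Or.inr (Or.inl hqC)
        · exact Or.inl rfl
        · by_cases hqA : q ∈ Aset
          · exact Or.inr (Or.inr hqA)
          · exfalso
            rw [hMD q hqD hqA, hch2 q (Finset.mem_of_mem_erase hqD)] at h
            exact swap_ne _ h.symm
      · rintro (rfl | hqC | hqA)
        · rw [hMp1]
        · rw [hMCs q hqC]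
          exact hch1 q hqC
        · rw [hMA q hqA]
    have hkD : (Ds.erase p1).card = k - 1 := by
      rw [Finset.card_erase_of_mem hp1, hDscard]
    have hdisj1 : Disjoint Cs (Ds.erase p1 \ Aset) := by
      apply Finset.disjoint_left.mpr
      intro q hqC hq2
      exact (hdisjCD q).mp hqC (Finset.mem_of_mem_erase (Finset.mem_sdiff.mp hq2).1)
    have hMS1 : (M ∩ S₁).card = m + (k - 1 - Aset.card) := by
      rw [inter_card_eq hMa ha1 hMc hc1, hagree1, Finset.card_union_of_disjoint hdisj1,
        Finset.card_sdiff_of_subset hAsub, hkD]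
    have hp1nCA : p1 ∉ Cs ∪ Aset := by
      rw [Finset.mem_union]
      rintro (h | h)
      · exact hCs_ne_p1 h
      · exact (Finset.mem_erase.mp (hAsub h)).1 rfl
    have hdisj2 : Disjoint Cs Aset := by
      apply Finset.disjoint_left.mpr
      intro q hqC hq2
      exact (hdisjCD q).mp hqC (Finset.mem_of_mem_erase (hAsub hq2))
    have hMS2 : (M ∩ S₂).card = m + 1 + Aset.card := by
      rw [inter_card_eq hMa ha2 hMc hc2, hagree2, Finset.card_insert_of_notMem hp1nCA,
        Finset.card_union_of_disjoint hdisj2]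
      omega
    rcases (by omega : Aset.card = 0 ∨ Aset.card = 1) with h0 | h1
    · have hkM1 : n - (M ∩ S₁).card = 1 := by omega
      have hIH := IH 1 (by omega) M hM S₁ hS₁ hkM1
      have hparM := parity1 hMa ha1 hMc hc1
      omega
    · have hkM2 : n - (M ∩ S₂).card = k - 2 := by omega
      have hIH := IH (k - 2) (by omega) M hM S₂ hS₂ hkM2
      have hparM := parity1 hMa ha2 hMc hc2
      omega


end LagAux

set_option linter.all false in
set_option linter.unusedVariables false in
open LagAux in
/-- A Lagrangian (symplectic) matroid — a collection of admissible `n`-subsets of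
`J` with a Gale-maximal member for every `B_n`-admissible ordering — is an
orthogonal matroid (has a Gale-maximal member for every `D_n`-admissible partial
ordering) if and only if it is **even**: `|B ∩ I|` has the same parity for all
bases `B`. -/
theorem lagrangian_orthogonal_iff_even {n : ℕ} (ℬ : Set (Finset (Fin n ⊕ Fin n)))
    (hne : ℬ.Nonempty)
    (hadm : ∀ S ∈ ℬ, S.card = n ∧ JAdmissible S)
    (hLag : ∀ a : Fin n → Fin n ⊕ Fin n, IsAdmissibleTuple a →
      ∃ M ∈ ℬ, ∀ S ∈ ℬ, GaleLe (BnLe a) S M) :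
    (∀ a : Fin n → Fin n ⊕ Fin n, IsAdmissibleTuple a →
      ∃ M ∈ ℬ, ∀ S ∈ ℬ, GaleLe (DnLe a) S M) ↔
    (∀ S₁ ∈ ℬ, ∀ S₂ ∈ ℬ,
      (S₁.filter (fun x => x.isLeft = true)).card % 2 =
        (S₂.filter (fun x => x.isLeft = true)).card % 2) := by
  classical
  constructor
  · intro hDn S₁ hS₁ S₂ hS₂
    exact even_of_orthogonal ℬ hadm hLag hDn (n - (S₁ ∩ S₂).card) S₁ hS₁ S₂ hS₂ rfl
  · intro hEven a ha
    obtain ⟨M, hM, hmax⟩ := hLag a ha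
    obtain ⟨hMc, hMa⟩ := hadm M hM
    refine ⟨M, hM, fun S hS => ?_⟩
    obtain ⟨hSc, hSa⟩ := hadm S hS
    obtain ⟨φ, hφM, hφle⟩ := hmax S hS
    rcases Nat.eq_zero_or_pos n with hn | hn
    · refine ⟨φ, hφM, fun x hx => ?_⟩
      exfalso
      have hSe : S = ∅ := Finset.card_eq_zero.mp (by rw [hSc, hn])
      rw [hSe] at hx
      exact absurd hx (Finset.notMem_empty x)
    · set i0 : Fin n := ⟨n - 1, by omega⟩ with hi0
      set x0 := a i0 with hx0
      set y0 := Sum.swap x0 with hy0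
      have hvi0 : (i0 : ℕ) = n - 1 := rfl
      have hlx0 : lvl a x0 = n - 1 := by rw [hx0, lvl_apply ha, hvi0]
      have hly0 : lvl a y0 = n := by
        rw [hy0, hx0, lvl_swap_apply ha, hvi0]
        omega
      by_cases hcase : x0 ∈ S ∧ φ x0 = y0
      · obtain ⟨hx0S, hφx0⟩ := hcase
        by_cases hz : ∃ z ∈ S, z ≠ x0 ∧ lvl a z < n ∧ n ≤ lvl a (φ z)
        · obtain ⟨z, hzS, hzne, hzlt, hzge⟩ := hz
          refine ⟨(Equiv.swap x0 z).trans φ, ?_, ?_⟩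
          · intro x hx
            simp only [Equiv.trans_apply]
            by_cases h1 : x = x0
            · rw [h1, Equiv.swap_apply_left]; exact hφM z hzS
            by_cases h2 : x = z
            · rw [h2, Equiv.swap_apply_right]; exact hφM x0 hx0S
            · rw [Equiv.swap_apply_of_ne_of_ne h1 h2]; exact hφM x hx
          · intro x hx
            simp only [Equiv.trans_apply]
            by_cases h1 : x = x0
            · rw [h1, Equiv.swap_apply_left]
              have hφzne : φ z ≠ y0 := by
                rw [← hφx0]
                exact fun h => hzne (φ.injective h)
              have hn' : lvl a (φ z) ≠ n := fun h => hφzne (lvl_inj ha (by rw [h, hly0]))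
              refine Or.inr ⟨by omega, ?_⟩
              rintro ⟨-, h2⟩
              exact hn' h2
            by_cases h2 : x = z
            · rw [h2, Equiv.swap_apply_right, hφx0]
              have hzn1 : lvl a z ≠ n - 1 := fun h => hzne (lvl_inj ha (by rw [h, hlx0]))
              refine Or.inr ⟨by omega, ?_⟩
              rintro ⟨h3, -⟩
              exact hzn1 h3
            · rw [Equiv.swap_apply_of_ne_of_ne h1 h2]
              rcases hφle x hx with heq | hlt
              · exact Or.inl heq
              · refine Or.inr ⟨hlt, ?_⟩
                rintro ⟨h3, h4⟩
                exact h1 (lvl_inj ha (by rw [h3, hlx0]))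
        · exfalso
          push_neg at hz
          have himg : S.image φ = M := by
            apply Finset.eq_of_subset_of_card_le
            · intro y hy
              obtain ⟨x, hx, rfl⟩ := Finset.mem_image.mp hy
              exact hφM x hx
            · rw [Finset.card_image_of_injective _ φ.injective, hSc, hMc]
          have hfilt : S.filter (fun x => n ≤ lvl a (φ x))
              = insert x0 (S.filter (fun x => n ≤ lvl a x)) := by
            ext x
            simp only [Finset.mem_filter, Finset.mem_insert]
            constructor
            · rintro ⟨hxS, hge⟩
              by_cases h1 : x = x0
              · exact Or.inl h1
              · refine Or.inr ⟨hxS, ?_⟩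
                by_contra hlt
                exact absurd (hz x hxS h1 (by omega)) (by omega)
            · rintro (rfl | ⟨hxS, hge⟩)
              · exact ⟨hx0S, by rw [hφx0, hly0]⟩
              · refine ⟨hxS, ?_⟩
                rcases hφle x hxS with heq | hlt
                · rw [← heq]; exact hge
                · omega
          have hx0nf : x0 ∉ S.filter (fun x => n ≤ lvl a x) := by
            simp only [Finset.mem_filter]
            rintro ⟨-, hge⟩
            omega
          have hcount : (M.filter (fun x => n ≤ lvl a x)).card
              = (S.filter (fun x => n ≤ lvl a x)).card + 1 := by
            rw [← himg, Finset.filter_image, Finset.card_image_of_injective _ φ.injective,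
              hfilt, Finset.card_insert_of_notMem hx0nf]
          have hp2S := parity2 ha hSc hSa
          have hp2M := parity2 ha hMc hMa
          have hEq := hEven S hS M hM
          omega
      · refine ⟨φ, hφM, fun x hx => ?_⟩
        rcases hφle x hx with heq | hlt
        · exact Or.inl heq
        · refine Or.inr ⟨hlt, ?_⟩
          rintro ⟨h1, h2⟩
          have hxx0 : x = x0 := lvl_inj ha (by rw [h1, hlx0])
          have hφxy0 : φ x = y0 := lvl_inj ha (by rw [h2, hly0])
          exact hcase ⟨hxx0 ▸ hx, by rw [← hxx0]; exact hφxy0⟩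
end

section
/- Let A be a skew-symmetric n×n real matrix with a_{ij} ≠ 0 for some fixed i < j. Let B be the skew-symmetric matrix obtained by swapping columns i, j of A with columns i, j of the identity in the compound matrix (A, I_n) and row-reducing back to the form (B, I_n). Then b_{ij} = −1/a_{ij}; b_{il} = a_{lj}/a_{ij} and b_{jl} = a_{il}/a_{ij} for l ∉ {i,j}; b_{ki} = a_{jk}/a_{ij} and b_{kj} = a_{ki}/a_{ij} for k ∉ {i,j}; b_{kk} = 0; and for {i,j,k,l} all distinct, b_{kl} = [a_{ij}a_{kl}]/a_{ij}, where [a_{ij}a_{kl}] = ±Pf(A_{\{i,j,k,l\}}) with sign chosen so the term a_{ij}a_{kl} appears with positive sign. -/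
/-- The compound matrix `(A, I_n)` after swapping columns `i, j` of `A` with
columns `i, j` of the identity: its left block. -/
def swapLeft {n : ℕ} (A : Matrix (Fin n) (Fin n) ℝ) (i j : Fin n) :
    Matrix (Fin n) (Fin n) ℝ :=
  Matrix.of fun r c => if c = i ∨ c = j then (if r = c then 1 else 0) else A r c

/-- The compound matrix `(A, I_n)` after swapping columns `i, j` of `A` with
columns `i, j` of the identity: its right block. -/
def swapRight {n : ℕ} (A : Matrix (Fin n) (Fin n) ℝ) (i j : Fin n) :
    Matrix (Fin n) (Fin n) ℝ :=
  Matrix.of fun r c => if c = i ∨ c = j then A r c else (if r = c then 1 else 0)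

/-- Let `A` be skew-symmetric with `a_{ij} ≠ 0` for some `i < j`, and let `B` be
the matrix obtained by swapping columns `i, j` of `A` with columns `i, j` of the
identity in the compound matrix `(A, I_n)` and row-reducing back to the form
`(B, I_n)` — i.e. `B` satisfies `(swapRight A i j) * B = swapLeft A i j`.  Then `B`
is skew-symmetric with `b_{ij} = −1/a_{ij}`; `b_{il} = a_{lj}/a_{ij}` and
`b_{jl} = a_{il}/a_{ij}` for `l ∉ {i,j}`; `b_{ki} = a_{jk}/a_{ij}` and
`b_{kj} = a_{ki}/a_{ij}` for `k ∉ {i,j}`; `b_{kk} = 0`; and for `i, j, k, l` all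
distinct, `b_{kl} = [a_{ij}a_{kl}]/a_{ij}`, where
`[a_{ij}a_{kl}] = a_{ij}a_{kl} − a_{ik}a_{jl} + a_{il}a_{jk}` is the Pfaffian of
the principal minor of `A` on `{i,j,k,l}` signed so that the term `a_{ij}a_{kl}`
appears with positive sign. -/
theorem columnExchange_form {n : ℕ} (A B : Matrix (Fin n) (Fin n) ℝ)
    (hA : A.transpose = -A) (i j : Fin n) (hij : i < j) (ha : A i j ≠ 0)
    (hB : swapRight A i j * B = swapLeft A i j) :
    B.transpose = -B ∧
    B i j = -1 / A i j ∧
    (∀ l, l ≠ i → l ≠ j →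
      B i l = A l j / A i j ∧ B j l = A i l / A i j ∧
      B l i = A j l / A i j ∧ B l j = A l i / A i j) ∧
    (∀ k, B k k = 0) ∧
    (∀ k l, k ≠ l → k ≠ i → k ≠ j → l ≠ i → l ≠ j →
      B k l = (A i j * A k l - A i k * A j l + A i l * A j k) / A i j) := by
  have hij' : i ≠ j := ne_of_lt hij
  have askew : ∀ x y, A y x = -A x y := fun x y => by
    have := congrFun (congrFun hA x) y
    simpa [Matrix.transpose_apply] using this
  have adiag : ∀ x, A x x = 0 := fun x => by have := askew x x; linarith
  have key : ∀ r c, A r i * B i c + A r j * B j c +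
      (if r = i ∨ r = j then 0 else B r c) = swapLeft A i j r c := by
    intro r c
    have h := congrFun (congrFun hB r) c
    rw [Matrix.mul_apply] at h
    rw [← h]
    rw [← Finset.add_sum_erase _ _ (Finset.mem_univ i),
        ← Finset.add_sum_erase _ _
          (Finset.mem_erase.mpr ⟨(Ne.symm hij'), Finset.mem_univ j⟩)]
    have h1 : ∀ x ∈ (Finset.univ.erase i).erase j,
        swapRight A i j r x * B x c = if r = x then B x c else 0 := by
      intro x hx
      obtain ⟨hxj, hxi⟩ : x ≠ j ∧ x ≠ i := by
        simpa [Finset.mem_erase] using hx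
      simp [swapRight, hxi, hxj]
    rw [Finset.sum_congr rfl h1, Finset.sum_ite_eq]
    simp only [swapRight, Matrix.of_apply, Finset.mem_erase, Finset.mem_univ, and_true]
    by_cases hri : r = i <;> by_cases hrj : r = j <;>
      simp [hri, hrj, hij', Ne.symm hij'] <;> ring
  have hBi : ∀ c, B i c = -(swapLeft A i j j c) / A i j := by
    intro c
    have h := key j c
    rw [if_pos (Or.inr rfl), adiag j, askew i j] at h
    field_simp at h ⊢
    linarith
  have hBj : ∀ c, B j c = (swapLeft A i j i c) / A i j := by
    intro c
    have h := key i c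
    rw [if_pos (Or.inl rfl), adiag i] at h
    field_simp at h ⊢
    linarith
  have hBk : ∀ k, k ≠ i → k ≠ j → ∀ c,
      B k c = swapLeft A i j k c - A k i * B i c - A k j * B j c := by
    intro k hki hkj c
    have h := key k c
    rw [if_neg (by simp [hki, hkj])] at h
    linarith
  -- entry values
  have sLji : swapLeft A i j j i = 0 := by simp [swapLeft, Ne.symm hij']
  have sLjj : swapLeft A i j j j = 1 := by simp [swapLeft]
  have sLii : swapLeft A i j i i = 1 := by simp [swapLeft]
  have sLij : swapLeft A i j i j = 0 := by simp [swapLeft, hij']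
  have sLx : ∀ r l, l ≠ i → l ≠ j → swapLeft A i j r l = A r l := by
    intro r l hli hlj; simp [swapLeft, hli, hlj]
  have sLki : ∀ k, k ≠ i → swapLeft A i j k i = 0 := by
    intro k hki; simp [swapLeft, hki]
  have sLkj : ∀ k, k ≠ j → swapLeft A i j k j = 0 := by
    intro k hkj; simp [swapLeft, hkj]
  have hBii : B i i = 0 := by rw [hBi i, sLji]; simp
  have hBij : B i j = -1 / A i j := by rw [hBi j, sLjj]
  have hBil : ∀ l, l ≠ i → l ≠ j → B i l = -A j l / A i j := by
    intro l hli hlj; rw [hBi l, sLx j l hli hlj]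
  have hBji : B j i = 1 / A i j := by rw [hBj i, sLii]
  have hBjj : B j j = 0 := by rw [hBj j, sLij]; simp
  have hBjl : ∀ l, l ≠ i → l ≠ j → B j l = A i l / A i j := by
    intro l hli hlj; rw [hBj l, sLx i l hli hlj]
  have hBki : ∀ k, k ≠ i → k ≠ j → B k i = -A k j / A i j := by
    intro k hki hkj
    rw [hBk k hki hkj i, sLki k hki, hBii, hBji]
    ring
  have hBkj : ∀ k, k ≠ i → k ≠ j → B k j = A k i / A i j := by
    intro k hki hkj
    rw [hBk k hki hkj j, sLkj k hkj, hBij, hBjj]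
    ring
  have hBkl : ∀ k l, k ≠ i → k ≠ j → l ≠ i → l ≠ j →
      B k l = (A i j * A k l - A i k * A j l + A i l * A j k) / A i j := by
    intro k l hki hkj hli hlj
    rw [hBk k hki hkj l, sLx k l hli hlj, hBil l hli hlj, hBjl l hli hlj]
    rw [askew i k, askew j k]
    field_simp
    ring
  have hBkk : ∀ k, B k k = 0 := by
    intro k
    by_cases hki : k = i
    · rw [hki]; exact hBii
    by_cases hkj : k = j
    · rw [hkj]; exact hBjj
    rw [hBkl k k hki hkj hki hkj, adiag k]
    field_simp
    ring
  refine ⟨?_, hBij, ?_, hBkk, fun k l _ => hBkl k l⟩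
  · ext x y
    simp only [Matrix.transpose_apply, Matrix.neg_apply]
    by_cases hxy : x = y
    · rw [hxy, hBkk]; ring
    by_cases hxi : x = i
    · rw [hxi]; rw [hxi] at hxy
      by_cases hyj : y = j
      · rw [hyj]; rw [hBji, hBij]; ring
      · have hyi : y ≠ i := fun h => hxy h.symm
        rw [hBki y hyi hyj, hBil y hyi hyj, askew j y]; ring
    by_cases hxj : x = j
    · rw [hxj]; rw [hxj] at hxy
      by_cases hyi : y = i
      · rw [hyi]; rw [hBij, hBji]; ring
      · have hyj : y ≠ j := fun h => hxy h.symm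
        rw [hBkj y hyi hyj, hBjl y hyi hyj, askew i y]; ring
    by_cases hyi : y = i
    · rw [hyi]; rw [hBil x hxi hxj, hBki x hxi hxj, askew j x]; ring
    by_cases hyj : y = j
    · rw [hyj]; rw [hBjl x hxi hxj, hBkj x hxi hxj, askew i x]; ring
    · rw [hBkl y x hyi hyj hxi hxj, hBkl x y hxi hxj hyi hyj, askew x y]; ring
  · intro l hli hlj
    refine ⟨?_, hBjl l hli hlj, ?_, ?_⟩
    · rw [hBil l hli hlj, askew j l]
    · rw [hBki l hli hlj, askew j l]; ring
    · rw [hBkj l hli hlj]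
end
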